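/- arXiv:0810.2106 — 3 statements merged into one kernel-verified Lean document; each statement's English description precedes it below -/
import Mathlib

section
/- Suppose ℓ = 3. If f is odd, then the residue classes −1 + 4·s(B*) mod 3^f − 1 are pairwise distinct, and none is congruent to 0 modulo (3^f−1)/2, as B* runs through all subsets of {0,1,…,f−1} other than {0,2,…,f−1} and {1,3,…,f−2}. If f is even, then the residue classes 4·s(B*) mod 3^f − 1 are pairwise distinct, and none is congruent to 0 modulo (3^f−1)/2, as B* runs through all nonempty proper subsets of {0,1,…,f−1} other than {0,2,…,f−2} and {1,3,…,f−1}. Letting A denote the set of such residue classes in each case, for all integers n₁, n₂ with n = n₁ − n₂ one has: M(n₁,n₂) = 2^f + 2 if either (n ≡ 0 mod 3^f−1 and f is even) or n ≡ (3^f−1)/2 (mod 3^f−1); M(n₁,n₂) = 2^f + 1 if the class of n mod 3^f−1 lies in A; and M(n₁,n₂) = 2^f otherwise. -/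
namespace Stmt16

/-- `s(B*) = ∑_{i∈B*} (−1)^i 3^i`. -/
def sAlt (f : ℕ) (B : Finset (Fin f)) : ℤ :=
  ∑ i ∈ B, (-1 : ℤ) ^ (i : ℕ) * (3 : ℤ) ^ (i : ℕ)

/-- The set of even indices in `{0,…,f−1}`. -/
def evens (f : ℕ) : Finset (Fin f) := Finset.univ.filter fun i => Even (i : ℕ)

/-- The set of odd indices in `{0,…,f−1}`. -/
def odds (f : ℕ) : Finset (Fin f) := Finset.univ.filter fun i => ¬ Even (i : ℕ)

/-- The set `T(n₁,n₂)` (with `ℓ = 3`) of triples `(a,b,B)` with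
`a ∈ {0,…,3^f−2}`, `b ∈ {1,2,3}^f`, `B ⊆ {0,…,f−1}`, with
`n₁ ≡ a + ∑_{i∈B} b_i 3^i` and `n₂ ≡ a + ∑_{i∉B} b_i 3^i (mod 3^f−1)`. -/
def Tset2 (f : ℕ) (n₁ n₂ : ℤ) : Set (ℤ × (Fin f → ℤ) × Finset (Fin f)) :=
  {x | (0 ≤ x.1 ∧ x.1 ≤ (3 : ℤ) ^ f - 2) ∧
    (∀ i, 1 ≤ x.2.1 i ∧ x.2.1 i ≤ (3 : ℤ)) ∧
    Int.ModEq ((3 : ℤ) ^ f - 1) n₁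
      (x.1 + ∑ i ∈ x.2.2, x.2.1 i * (3 : ℤ) ^ (i : ℕ)) ∧
    Int.ModEq ((3 : ℤ) ^ f - 1) n₂
      (x.1 + ∑ i ∈ x.2.2ᶜ, x.2.1 i * (3 : ℤ) ^ (i : ℕ))}

/-- The class of `n mod 3^f − 1` lies in the set `A` of the statement:
if `f` is odd, `A` consists of the classes `−1 + 4·s(B*)` for subsets `B*`
other than `{0,2,…,f−1}` and `{1,3,…,f−2}`; if `f` is even, of the classes
`4·s(B*)` for nonempty proper `B*` other than `{0,2,…,f−2}` and
`{1,3,…,f−1}`. -/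
def inA (f : ℕ) (n : ℤ) : Prop :=
  (Odd f ∧ ∃ B : Finset (Fin f), B ≠ evens f ∧ B ≠ odds f ∧
      Int.ModEq ((3 : ℤ) ^ f - 1) n (-1 + 4 * sAlt f B)) ∨
  (Even f ∧ ∃ B : Finset (Fin f), B.Nonempty ∧ B ≠ Finset.univ ∧
      B ≠ evens f ∧ B ≠ odds f ∧
      Int.ModEq ((3 : ℤ) ^ f - 1) n (4 * sAlt f B))

open scoped symmDiff

def hsum (f : ℕ) : ℤ := ∑ i ∈ Finset.range f, (3:ℤ)^i

lemma two_hsum (f : ℕ) : 2 * hsum f = 3^f - 1 := by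
  induction f with
  | zero => simp [hsum]
  | succ n ih =>
    simp only [hsum, Finset.sum_range_succ] at *
    have : (3:ℤ)^(n+1) = 3 * 3^n := by ring
    linarith

lemma fin_sum_pow (f : ℕ) : ∑ i : Fin f, (3:ℤ)^(i:ℕ) = hsum f := by
  exact Fin.sum_univ_eq_sum_range (fun i => (3:ℤ)^i) f

def sig {f : ℕ} (B : Finset (Fin f)) : ℤ := ∑ i ∈ B, (3:ℤ)^(i:ℕ)

def ind {f : ℕ} (B : Finset (Fin f)) : Fin f → ℤ := fun i => if i ∈ B then 1 else 0

lemma sig_eq {f : ℕ} (B : Finset (Fin f)) : sig B = ∑ i : Fin f, ind B i * 3^(i:ℕ) := by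
  simp only [sig, ind, ite_mul, one_mul, zero_mul, Finset.sum_ite_mem, Finset.univ_inter]

lemma val_bounds {f : ℕ} (d : Fin f → ℤ) (hd : ∀ i, 0 ≤ d i ∧ d i ≤ 2) :
    0 ≤ ∑ i : Fin f, d i * 3^(i:ℕ) ∧ ∑ i : Fin f, d i * 3^(i:ℕ) ≤ 3^f - 1 := by
  constructor
  · exact Finset.sum_nonneg fun i _ => mul_nonneg (hd i).1 (by positivity)
  · have h1 : ∑ i : Fin f, d i * 3^(i:ℕ) ≤ ∑ i : Fin f, 2 * 3^(i:ℕ) :=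
      Finset.sum_le_sum fun i _ => mul_le_mul_of_nonneg_right (hd i).2 (by positivity)
    have h2 : ∑ i : Fin f, (2:ℤ) * 3^(i:ℕ) = 2 * hsum f := by
      rw [← Finset.mul_sum, fin_sum_pow]
    rw [h2, two_hsum] at h1
    exact h1

lemma digits_inj : ∀ {f : ℕ} (d e : Fin f → ℤ), (∀ i, 0 ≤ d i ∧ d i ≤ 2) →
    (∀ i, 0 ≤ e i ∧ e i ≤ 2) →
    ∑ i : Fin f, d i * 3^(i:ℕ) = ∑ i : Fin f, e i * 3^(i:ℕ) → d = e := by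
  intro f
  induction f with
  | zero => intro d e _ _ _; funext i; exact i.elim0
  | succ n ih =>
    intro d e hd he h
    rw [Fin.sum_univ_castSucc (f := fun i => d i * 3^(i:ℕ)),
        Fin.sum_univ_castSucc (f := fun i => e i * 3^(i:ℕ))] at h
    simp only [Fin.coe_castSucc, Fin.val_last] at h
    have bd := val_bounds (fun i : Fin n => d i.castSucc) (fun i => hd _)
    have be := val_bounds (fun i : Fin n => e i.castSucc) (fun i => he _)
    have hpow : (0:ℤ) < 3^n := by positivity
    have hlast : d (Fin.last n) = e (Fin.last n) := by nlinarith [(hd (Fin.last n)).1, (hd (Fin.last n)).2, (he (Fin.last n)).1, (he (Fin.last n)).2]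
    have htail : (fun i : Fin n => d i.castSucc) = (fun i : Fin n => e i.castSucc) := by
      apply ih _ _ (fun i => hd _) (fun i => he _)
      rw [hlast] at h
      linarith
    funext i
    rcases Fin.eq_castSucc_or_eq_last i with ⟨j, rfl⟩ | rfl
    · exact congrFun htail j
    · exact hlast

lemma sig_inj {f : ℕ} (B₁ B₂ : Finset (Fin f)) (h : sig B₁ = sig B₂) : B₁ = B₂ := by
  rw [sig_eq, sig_eq] at h
  have := digits_inj (ind B₁) (ind B₂)
    (fun i => by unfold ind; split <;> omega) (fun i => by unfold ind; split <;> omega) h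
  ext i
  have := congrFun this i
  unfold ind at this
  by_cases h1 : i ∈ B₁ <;> by_cases h2 : i ∈ B₂ <;> simp [h1, h2] at this ⊢


def sE (f : ℕ) : ℤ := ∑ i ∈ Finset.range f, if Even i then (3:ℤ)^i else 0
def sO (f : ℕ) : ℤ := ∑ i ∈ Finset.range f, if ¬ Even i then (3:ℤ)^i else 0

lemma sig_evens (f : ℕ) : sig (evens f) = sE f := by
  rw [sig, evens, Finset.sum_filter]
  exact Fin.sum_univ_eq_sum_range (fun i => if Even i then (3:ℤ)^i else 0) f

lemma sig_odds (f : ℕ) : sig (odds f) = sO f := by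
  rw [sig, odds, Finset.sum_filter]
  exact Fin.sum_univ_eq_sum_range (fun i => if ¬ Even i then (3:ℤ)^i else 0) f

lemma sE_sO (f : ℕ) : (Even f → 4 * sE f = hsum f ∧ 4 * sO f = 3 * hsum f) ∧
    (¬ Even f → 4 * sE f = 3 * hsum f + 1 ∧ 4 * sO f = hsum f - 1) := by
  induction f with
  | zero => simp [sE, sO, hsum]
  | succ n ih =>
    have h2 := two_hsum n
    have hsucc : hsum (n+1) = hsum n + 3^n := by simp [hsum, Finset.sum_range_succ]
    have hEsucc : sE (n+1) = sE n + (if Even n then (3:ℤ)^n else 0) := by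
      simp [sE, Finset.sum_range_succ]
    have hOsucc : sO (n+1) = sO n + (if ¬ Even n then (3:ℤ)^n else 0) := by
      simp [sO, Finset.sum_range_succ]
    by_cases hn : Even n
    · have hodd : ¬ Even (n+1) := by simp [Nat.even_add_one, hn]
      obtain ⟨e1, e2⟩ := ih.1 hn
      simp only [hn, if_true, not_true, if_false] at hEsucc hOsucc
      constructor
      · intro h; exact absurd h hodd
      · intro _; constructor <;> [skip; skip] <;> rw [hsucc] <;> linarith
    · have heven : Even (n+1) := by simpa [Nat.even_add_one] using hn
      obtain ⟨e1, e2⟩ := ih.2 hn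
      simp only [hn, if_false, not_false_iff, if_true] at hEsucc hOsucc
      constructor
      · intro _; constructor <;> rw [hsucc] <;> linarith
      · intro h; exact absurd heven h

lemma hsum_pos {f : ℕ} (hf : 0 < f) : 1 ≤ hsum f := by
  have h2 := two_hsum f
  have : (3:ℤ)^1 ≤ 3^f := pow_le_pow_right₀ (by norm_num) hf
  norm_num at this
  linarith

lemma sig_nonneg {f : ℕ} (B : Finset (Fin f)) : 0 ≤ sig B :=
  Finset.sum_nonneg fun i _ => by positivity

lemma sig_univ (f : ℕ) : sig (Finset.univ : Finset (Fin f)) = hsum f := fin_sum_pow f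

lemma sig_le {f : ℕ} (B : Finset (Fin f)) : sig B ≤ hsum f := by
  rw [← sig_univ]
  exact Finset.sum_le_sum_of_subset_of_nonneg (Finset.subset_univ B)
    (fun i _ _ => by positivity)

lemma sig_empty (f : ℕ) : sig (∅ : Finset (Fin f)) = 0 := rfl

lemma two_digit_eq {f : ℕ} (B₁ C₁ B₂ C₂ : Finset (Fin f))
    (h : sig B₁ + sig C₁ = sig B₂ + sig C₂) :
    ∀ i, ind B₁ i + ind C₁ i = ind B₂ i + ind C₂ i := by
  have key := digits_inj (fun i => ind B₁ i + ind C₁ i) (fun i => ind B₂ i + ind C₂ i)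
    (fun i => by dsimp only [ind]; split <;> split <;> omega)
    (fun i => by dsimp only [ind]; split <;> split <;> omega) ?_
  · intro i; exact congrFun key i
  · simp only [add_mul, Finset.sum_add_distrib, ← sig_eq]
    exact h

lemma ind_le_one {f : ℕ} (B : Finset (Fin f)) (i : Fin f) :
    0 ≤ ind B i ∧ ind B i ≤ 1 := by unfold ind; split <;> omega

lemma mem_iff_ind {f : ℕ} (B : Finset (Fin f)) (i : Fin f) : i ∈ B ↔ ind B i = 1 := by
  unfold ind; split <;> simp_all

lemma ind_evens {f : ℕ} (i : Fin f) : ind (evens f) i = if Even (i:ℕ) then 1 else 0 := by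
  unfold ind evens; simp
lemma ind_odds {f : ℕ} (i : Fin f) : ind (odds f) i = if ¬ Even (i:ℕ) then 1 else 0 := by
  unfold ind odds; simp

lemma half_case {f : ℕ} (hf : 0 < f) (B₁ B₂ : Finset (Fin f))
    (h : 2 * (sig B₁ - sig B₂) = hsum f) :
    Even f ∧ B₁ = odds f ∧ B₂ = evens f := by
  have hev : Even f := by
    by_contra hodd
    obtain ⟨e1, e2⟩ := (sE_sO f).2 hodd
    omega
  obtain ⟨e1, e2⟩ := (sE_sO f).1 hev
  rw [← sig_evens] at e1
  rw [← sig_odds] at e2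
  have key : sig B₁ + sig (evens f) = sig B₂ + sig (odds f) := by linarith
  have hdig := two_digit_eq _ _ _ _ key
  refine ⟨hev, ?_, ?_⟩
  · ext i
    have := hdig i
    rw [ind_evens, ind_odds] at this
    rw [mem_iff_ind, mem_iff_ind, ind_odds]
    have h1 := ind_le_one B₁ i
    have h2 := ind_le_one B₂ i
    by_cases he : Even (i:ℕ) <;> simp [he] at this ⊢ <;> omega
  · ext i
    have := hdig i
    rw [ind_evens, ind_odds] at this
    rw [mem_iff_ind, mem_iff_ind, ind_evens]
    have h1 := ind_le_one B₁ i
    have h2 := ind_le_one B₂ i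
    by_cases he : Even (i:ℕ) <;> simp [he] at this ⊢ <;> omega

lemma collision {f : ℕ} (hf : 0 < f) (B₁ B₂ : Finset (Fin f))
    (h : ((3:ℤ)^f - 1) ∣ 4 * sig B₁ - 4 * sig B₂) :
    B₁ = B₂ ∨ (B₁ = ∅ ∧ B₂ = Finset.univ) ∨ (B₁ = Finset.univ ∧ B₂ = ∅) ∨
      (Even f ∧ ((B₁ = evens f ∧ B₂ = odds f) ∨ (B₁ = odds f ∧ B₂ = evens f))) := by
  have hM : (3:ℤ)^f - 1 = 2 * hsum f := (two_hsum f).symm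
  obtain ⟨k, hk⟩ := h
  rw [hM] at hk
  have hh := hsum_pos hf
  have b1 := sig_nonneg B₁; have b2 := sig_nonneg B₂
  have c1 := sig_le B₁; have c2 := sig_le B₂
  have hk2a : -2 ≤ k := by nlinarith
  have hk2b : k ≤ 2 := by nlinarith
  interval_cases k
  · -- k = -2
    have h1 : sig B₂ = hsum f := by linarith
    have h0 : sig B₁ = 0 := by linarith
    right; left
    exact ⟨sig_inj _ _ (by rw [h0, sig_empty]),
      sig_inj _ _ (by rw [h1, sig_univ])⟩
  · -- k = -1
    have := half_case hf B₂ B₁ (by linarith)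
    right; right; right
    exact ⟨this.1, Or.inl ⟨this.2.2, this.2.1⟩⟩
  · -- k = 0
    left; exact sig_inj _ _ (by linarith)
  · -- k = 1
    have := half_case hf B₁ B₂ (by linarith)
    right; right; right
    exact ⟨this.1, Or.inr ⟨this.2.1, this.2.2⟩⟩
  · -- k = 2
    have h1 : sig B₁ = hsum f := by linarith
    have h0 : sig B₂ = 0 := by linarith
    right; right; left
    exact ⟨sig_inj _ _ (by rw [h1, sig_univ]),
      sig_inj _ _ (by rw [h0, sig_empty])⟩


def tri : Finset ℤ := {0, 1, 2}

lemma mem_tri {x : ℤ} : x ∈ tri ↔ 0 ≤ x ∧ x ≤ 2 := by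
  simp only [tri, Finset.mem_insert, Finset.mem_singleton]
  omega

def vmap (f : ℕ) : (Fin f → ℤ) → ℤ := fun d => ∑ i : Fin f, d i * 3^(i:ℕ)

lemma image_vmap (f : ℕ) :
    (Fintype.piFinset fun _ : Fin f => tri).image (vmap f) = Finset.Icc 0 ((3:ℤ)^f - 1) := by
  apply Finset.eq_of_subset_of_card_le
  · intro x hx
    simp only [Finset.mem_image] at hx
    obtain ⟨d, hd, rfl⟩ := hx
    rw [Fintype.mem_piFinset] at hd
    have := val_bounds d (fun i => mem_tri.1 (hd i))
    simp only [Finset.mem_Icc]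
    exact ⟨this.1, this.2⟩
  · have hinj : Set.InjOn (vmap f) ↑(Fintype.piFinset fun _ : Fin f => tri) := by
      intro d hd e he h
      rw [Finset.mem_coe, Fintype.mem_piFinset] at hd he
      exact digits_inj d e (fun i => mem_tri.1 (hd i)) (fun i => mem_tri.1 (he i)) h
    rw [Finset.card_image_of_injOn hinj]
    have h1 : (Finset.Icc (0:ℤ) ((3:ℤ)^f - 1)).card = 3^f := by
      rw [Int.card_Icc]
      have : (3:ℤ)^f - 1 + 1 - 0 = ((3^f : ℕ) : ℤ) := by push_cast; ring
      rw [this, Int.toNat_natCast]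
    have h2 : (Fintype.piFinset fun _ : Fin f => tri).card = 3^f := by
      rw [Fintype.card_piFinset]
      have : tri.card = 3 := by decide
      simp [this]
    rw [h1, h2]

lemma card_Icc_filter_dvd (f : ℕ) (hf : 0 < f) (r : ℤ) :
    ((Finset.Icc (0:ℤ) ((3:ℤ)^f - 1)).filter (fun x => ((3:ℤ)^f - 1) ∣ x - r)).card
      = if ((3:ℤ)^f - 1) ∣ r then 2 else 1 := by
  set M : ℤ := (3:ℤ)^f - 1 with hM
  have hM2 : 2 ≤ M := by
    have : (3:ℤ)^1 ≤ 3^f := pow_le_pow_right₀ (by norm_num) hf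
    simp at this; omega
  by_cases hdvd : M ∣ r
  · rw [if_pos hdvd]
    have hset : (Finset.Icc (0:ℤ) M).filter (fun x => M ∣ x - r) = {0, M} := by
      ext x
      simp only [Finset.mem_filter, Finset.mem_Icc, Finset.mem_insert, Finset.mem_singleton]
      constructor
      · rintro ⟨⟨h0, h1⟩, hd⟩
        have hx : M ∣ x := by
          have := dvd_add hd hdvd
          simpa using this
        obtain ⟨k, rfl⟩ := hx
        have hk0 : 0 ≤ k := by nlinarith
        have hk1 : k ≤ 1 := by nlinarith
        interval_cases k
        · left; ring
        · right; ring
      · rintro (rfl | rfl)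
        · exact ⟨⟨le_refl _, by omega⟩, by simpa using hdvd.neg_right⟩
        · refine ⟨⟨by omega, le_refl _⟩, ?_⟩
          have : M - r = M + (-r) := by ring
          rw [this]
          exact dvd_add dvd_rfl hdvd.neg_right
    rw [hset]
    rw [Finset.card_insert_of_notMem (by simp; omega), Finset.card_singleton]
  · rw [if_neg hdvd]
    have hr0 : 0 ≤ r % M := Int.emod_nonneg r (by omega)
    have hr1 : r % M < M := Int.emod_lt_of_pos r (by omega)
    have hrd : M ∣ r - r % M := Int.dvd_self_sub_of_emod_eq rfl
    have hset : (Finset.Icc (0:ℤ) M).filter (fun x => M ∣ x - r) = {r % M} := by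
      ext x
      simp only [Finset.mem_filter, Finset.mem_Icc, Finset.mem_singleton]
      constructor
      · rintro ⟨⟨h0, h1⟩, hd⟩
        have hx : M ∣ x - r % M := by
          have := dvd_add hd hrd
          have he : x - r + (r - r % M) = x - r % M := by ring
          rwa [he] at this
        obtain ⟨k, hk⟩ := hx
        have hk0 : 0 ≤ k := by nlinarith
        have hk1 : k ≤ 1 := by nlinarith
        interval_cases k
        · omega
        · exfalso
          have hx0 : r % M = 0 := by omega
          exact hdvd (Int.dvd_of_emod_eq_zero hx0)
      · rintro rfl
        refine ⟨⟨hr0, by omega⟩, ?_⟩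
        have : r % M - r = -(r - r % M) := by ring
        rw [this]
        exact hrd.neg_right
    rw [hset, Finset.card_singleton]

lemma cardD (f : ℕ) (hf : 0 < f) (r : ℤ) :
    ((Fintype.piFinset fun _ : Fin f => tri).filter
      (fun d => ((3:ℤ)^f - 1) ∣ (∑ i : Fin f, d i * 3^(i:ℕ)) - r)).card
      = if ((3:ℤ)^f - 1) ∣ r then 2 else 1 := by
  have hinj : Set.InjOn (vmap f)
      ↑((Fintype.piFinset fun _ : Fin f => tri).filter
        (fun d => ((3:ℤ)^f - 1) ∣ (vmap f d) - r)) := by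
    intro d hd e he h
    rw [Finset.mem_coe, Finset.mem_filter, Fintype.mem_piFinset] at hd he
    exact digits_inj d e (fun i => mem_tri.1 (hd.1 i)) (fun i => mem_tri.1 (he.1 i)) h
  have h1 : ((Fintype.piFinset fun _ : Fin f => tri).filter
      (fun d => ((3:ℤ)^f - 1) ∣ (vmap f d) - r)).card
      = (((Fintype.piFinset fun _ : Fin f => tri).filter
        (fun d => ((3:ℤ)^f - 1) ∣ (vmap f d) - r)).image (vmap f)).card :=
    (Finset.card_image_of_injOn hinj).symm
  have h2 : ((Fintype.piFinset fun _ : Fin f => tri).filter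
        (fun d => ((3:ℤ)^f - 1) ∣ (vmap f d) - r)).image (vmap f)
      = ((Fintype.piFinset fun _ : Fin f => tri).image (vmap f)).filter
        (fun x => ((3:ℤ)^f - 1) ∣ x - r) := by
    rw [Finset.filter_image]
  show ((Fintype.piFinset fun _ : Fin f => tri).filter
      (fun d => ((3:ℤ)^f - 1) ∣ (vmap f d) - r)).card = _
  rw [h1, h2, image_vmap, card_Icc_filter_dvd f hf r]

def Cset : Finset ℤ := {-3, -2, -1, 1, 2, 3}

lemma mem_Cset {x : ℤ} : x ∈ Cset ↔ -3 ≤ x ∧ x ≤ 3 ∧ x ≠ 0 := by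
  simp only [Cset, Finset.mem_insert, Finset.mem_singleton]; omega

def sgn {f : ℕ} (c : Fin f → ℤ) : Finset (Fin f) := Finset.univ.filter (fun i => 0 < c i)

def Gset (f : ℕ) (n : ℤ) : Finset (Fin f → ℤ) :=
  (Fintype.piFinset fun _ : Fin f => Cset).filter
    (fun c => ((3:ℤ)^f - 1) ∣ (∑ i : Fin f, c i * 3^(i:ℕ)) - n)

noncomputable def cnt (f : ℕ) (n : ℤ) : ℕ :=
  (Finset.univ.filter (fun B : Finset (Fin f) =>
    ((3:ℤ)^f - 1) ∣ (4 * sig B + hsum f - n))).card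

lemma sig_compl {f : ℕ} (B : Finset (Fin f)) : sig B + sig Bᶜ = hsum f := by
  rw [sig, sig, Finset.sum_add_sum_compl, fin_sum_pow]

lemma shift_sum {f : ℕ} (c : Fin f → ℤ) (B : Finset (Fin f)) :
    ∑ i : Fin f, (if i ∈ B then c i - 1 else c i + 3) * 3^(i:ℕ)
      = (∑ i : Fin f, c i * 3^(i:ℕ)) - sig B + 3 * sig Bᶜ := by
  rw [← Finset.sum_add_sum_compl B (fun i => (if i ∈ B then c i - 1 else c i + 3) * 3^(i:ℕ)),
      ← Finset.sum_add_sum_compl B (fun i => c i * 3^(i:ℕ))]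
  have h1 : ∑ i ∈ B, (if i ∈ B then c i - 1 else c i + 3) * 3^(i:ℕ)
      = ∑ i ∈ B, (c i * 3^(i:ℕ) - 3^(i:ℕ)) :=
    Finset.sum_congr rfl fun i hi => by rw [if_pos hi]; ring
  have h2 : ∑ i ∈ Bᶜ, (if i ∈ B then c i - 1 else c i + 3) * 3^(i:ℕ)
      = ∑ i ∈ Bᶜ, (c i * 3^(i:ℕ) + 3 * 3^(i:ℕ)) :=
    Finset.sum_congr rfl fun i hi => by
      rw [if_neg (Finset.mem_compl.mp hi)]; ring
  rw [h1, h2, Finset.sum_sub_distrib, Finset.sum_add_distrib, ← Finset.mul_sum]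
  unfold sig
  ring

lemma card_fiber (f : ℕ) (hf : 0 < f) (n : ℤ) (B : Finset (Fin f)) :
    ((Gset f n).filter (fun c => sgn c = B)).card
      = if ((3:ℤ)^f - 1) ∣ (4 * sig B + hsum f - n) then 2 else 1 := by
  set M : ℤ := (3:ℤ)^f - 1 with hM
  set r : ℤ := n - sig B + 3 * sig Bᶜ with hr
  have hdvd_iff : (M ∣ r) ↔ (M ∣ (4 * sig B + hsum f - n)) := by
    have hkey : 4 * sig B + hsum f - n = 2 * M - r := by
      have := sig_compl B
      rw [hr, hM, ← two_hsum f]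
      linarith
    rw [hkey]
    have hm : M ∣ 2 * M := ⟨2, by ring⟩
    constructor
    · intro h
      exact dvd_sub hm h
    · intro h
      have h2 : r = 2 * M - (2 * M - r) := by ring
      rw [h2]
      exact dvd_sub hm h
  rw [if_congr hdvd_iff.symm rfl rfl, ← cardD f hf r]
  apply Finset.card_bij' (fun c _ => fun i => if i ∈ B then c i - 1 else c i + 3)
    (fun d _ => fun i => if i ∈ B then d i + 1 else d i - 3)
  · -- left inverse
    intro c hc
    simp only [Finset.mem_filter] at hc
    funext i
    by_cases hiB : i ∈ B <;> simp [hiB]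
  · -- right inverse
    intro d hd
    funext i
    by_cases hiB : i ∈ B <;> simp [hiB]


  · -- maps forward
    intro c hc
    simp only [Finset.mem_filter, Gset, Fintype.mem_piFinset] at hc ⊢
    obtain ⟨⟨hmem, hdvd⟩, hsgn⟩ := hc
    constructor
    · intro i
      have h1 := mem_Cset.mp (hmem i)
      rw [mem_tri]
      by_cases hiB : i ∈ B
      · have : 0 < c i := by
          have : i ∈ sgn c := hsgn ▸ hiB
          simpa [sgn] using this
        simp only [if_pos hiB]; omega
      · have : ¬ 0 < c i := by
          intro hpos
          exact hiB (hsgn ▸ (by simpa [sgn] using hpos : i ∈ sgn c))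
        simp only [if_neg hiB]; omega
    · rw [shift_sum]
      have : (∑ i : Fin f, c i * 3^(i:ℕ)) - sig B + 3 * sig Bᶜ - r
          = (∑ i : Fin f, c i * 3^(i:ℕ)) - n := by rw [hr]; ring
      rw [this]
      exact hdvd
  · -- maps backward
    intro d hd
    simp only [Finset.mem_filter, Fintype.mem_piFinset] at hd
    obtain ⟨hmem, hdvd⟩ := hd
    have hval : ∀ i : Fin f, 0 ≤ d i ∧ d i ≤ 2 := fun i => mem_tri.mp (hmem i)
    simp only [Finset.mem_filter, Gset, Fintype.mem_piFinset]
    refine ⟨⟨?_, ?_⟩, ?_⟩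
    · intro i
      rw [mem_Cset]
      by_cases hiB : i ∈ B
      · simp only [if_pos hiB]; have := hval i; omega
      · simp only [if_neg hiB]; have := hval i; omega
    · have heq : ∑ i : Fin f, (if i ∈ B then d i + 1 else d i - 3) * 3^(i:ℕ)
          = (∑ i : Fin f, d i * 3^(i:ℕ)) + sig B - 3 * sig Bᶜ := by
        rw [← Finset.sum_add_sum_compl B
            (fun i => (if i ∈ B then d i + 1 else d i - 3) * 3^(i:ℕ)),
          ← Finset.sum_add_sum_compl B (fun i => d i * 3^(i:ℕ))]
        have h1 : ∑ i ∈ B, (if i ∈ B then d i + 1 else d i - 3) * 3^(i:ℕ)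
            = ∑ i ∈ B, (d i * 3^(i:ℕ) + 3^(i:ℕ)) :=
          Finset.sum_congr rfl fun i hi => by rw [if_pos hi]; ring
        have h2 : ∑ i ∈ Bᶜ, (if i ∈ B then d i + 1 else d i - 3) * 3^(i:ℕ)
            = ∑ i ∈ Bᶜ, (d i * 3^(i:ℕ) - 3 * 3^(i:ℕ)) :=
          Finset.sum_congr rfl fun i hi => by
            rw [if_neg (Finset.mem_compl.mp hi)]; ring
        rw [h1, h2, Finset.sum_add_distrib, Finset.sum_sub_distrib, ← Finset.mul_sum]
        unfold sig
        ring
      rw [heq]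
      have : (∑ i : Fin f, d i * 3^(i:ℕ)) + sig B - 3 * sig Bᶜ - n
          = (∑ i : Fin f, d i * 3^(i:ℕ)) - r := by rw [hr]; ring
      rw [this]
      exact hdvd
    · ext i
      simp only [sgn, Finset.mem_filter, Finset.mem_univ, true_and]
      by_cases hiB : i ∈ B
      · simp only [if_pos hiB]; have := hval i; constructor <;> intro <;> [exact hiB; omega]
      · simp only [if_neg hiB]; have := hval i
        constructor <;> intro h
        · omega
        · exact absurd h hiB

lemma card_Gset (f : ℕ) (hf : 0 < f) (n : ℤ) :
    (Gset f n).card = 2^f + cnt f n := by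
  classical
  rw [Finset.card_eq_sum_card_fiberwise
    (f := sgn) (t := Finset.univ) (fun c _ => Finset.mem_univ _)]
  have : ∀ B ∈ (Finset.univ : Finset (Finset (Fin f))),
      ((Gset f n).filter (fun c => sgn c = B)).card
        = 1 + if ((3:ℤ)^f - 1) ∣ (4 * sig B + hsum f - n) then 1 else 0 := by
    intro B _
    rw [card_fiber f hf n B]
    split <;> rfl
  rw [Finset.sum_congr rfl this, Finset.sum_add_distrib]
  congr 1
  · simp [Finset.card_univ, Fintype.card_finset]
  · unfold cnt
    rw [Finset.card_filter]


lemma sign_split {f : ℕ} (b : Fin f → ℤ) (B : Finset (Fin f)) :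
    ∑ i : Fin f, (if i ∈ B then b i else -b i) * 3^(i:ℕ)
      = (∑ i ∈ B, b i * 3^(i:ℕ)) - ∑ i ∈ Bᶜ, b i * 3^(i:ℕ) := by
  rw [← Finset.sum_add_sum_compl B (fun i => (if i ∈ B then b i else -b i) * 3^(i:ℕ))]
  have h1 : ∑ i ∈ B, (if i ∈ B then b i else -b i) * 3^(i:ℕ)
      = ∑ i ∈ B, b i * 3^(i:ℕ) :=
    Finset.sum_congr rfl fun i hi => by rw [if_pos hi]
  have h2 : ∑ i ∈ Bᶜ, (if i ∈ B then b i else -b i) * 3^(i:ℕ)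
      = ∑ i ∈ Bᶜ, -(b i * 3^(i:ℕ)) :=
    Finset.sum_congr rfl fun i hi => by rw [if_neg (Finset.mem_compl.mp hi)]; ring
  rw [h1, h2, Finset.sum_neg_distrib]
  ring

lemma ncard_Tset2 (f : ℕ) (hf : 0 < f) (n₁ n₂ : ℤ) :
    (Tset2 f n₁ n₂).ncard = (Gset f (n₁ - n₂)).card := by
  classical
  set M : ℤ := (3:ℤ)^f - 1 with hM
  have hM2 : 2 ≤ M := by
    have : (3:ℤ)^1 ≤ 3^f := pow_le_pow_right₀ (by norm_num) hf
    simp at this; omega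
  set φ : ℤ × (Fin f → ℤ) × Finset (Fin f) → (Fin f → ℤ) :=
    fun x => fun i => if i ∈ x.2.2 then x.2.1 i else -x.2.1 i with hφ
  have hinj : Set.InjOn φ (Tset2 f n₁ n₂) := by
    rintro ⟨a, b, B⟩ hx ⟨a', b', B'⟩ hy h
    obtain ⟨⟨ha0, ha1⟩, hb, hc1, hc2⟩ := hx
    obtain ⟨⟨ha0', ha1'⟩, hb', hc1', hc2'⟩ := hy
    dsimp only at ha0 ha1 hb hc1 hc2 ha0' ha1' hb' hc1' hc2'
    simp only [hφ] at h
    have hBB : B = B' := by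
      ext i
      have hi := congrFun h i
      have h1 := hb i; have h2 := hb' i
      constructor <;> intro hmem
      · rw [if_pos hmem] at hi
        by_contra hmem'
        rw [if_neg hmem'] at hi
        omega
      · rw [if_pos hmem] at hi
        by_contra hmem'
        rw [if_neg hmem'] at hi
        omega
    subst hBB
    have hbb : b = b' := by
      funext i
      have hi := congrFun h i
      by_cases hmem : i ∈ B
      · rwa [if_pos hmem, if_pos hmem] at hi
      · rw [if_neg hmem, if_neg hmem] at hi; omega
    subst hbb
    have haa : a = a' := by
      have d1 : M ∣ (a + ∑ i ∈ B, b i * 3^(i:ℕ)) - n₁ := (Int.modEq_iff_dvd).mp hc1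
      have d2 : M ∣ (a' + ∑ i ∈ B, b i * 3^(i:ℕ)) - n₁ := (Int.modEq_iff_dvd).mp hc1'
      have d3 : M ∣ a - a' := by
        have := dvd_sub d1 d2
        have he : (a + ∑ i ∈ B, b i * 3^(i:ℕ)) - n₁ -
            ((a' + ∑ i ∈ B, b i * 3^(i:ℕ)) - n₁) = a - a' := by ring
        rwa [he] at this
      have : a - a' = 0 := Int.eq_zero_of_abs_lt_dvd d3 (by rw [abs_lt]; omega)
      omega
    subst haa
    rfl
  have himg : φ '' (Tset2 f n₁ n₂) = ↑(Gset f (n₁ - n₂)) := by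
    ext c
    simp only [Set.mem_image, Finset.coe_filter, Gset, Set.mem_setOf_eq,
      Fintype.mem_piFinset]
    constructor
    · rintro ⟨⟨a, b, B⟩, hx, rfl⟩
      obtain ⟨⟨ha0, ha1⟩, hb, hc1, hc2⟩ := hx
      dsimp only at ha0 ha1 hb hc1 hc2
      constructor
      · intro i
        simp only [hφ, mem_Cset]
        have := hb i
        split <;> omega
      · simp only [hφ]
        rw [sign_split]
        have d1 : M ∣ (a + ∑ i ∈ B, b i * 3^(i:ℕ)) - n₁ := (Int.modEq_iff_dvd).mp hc1
        have d2 : M ∣ (a + ∑ i ∈ Bᶜ, b i * 3^(i:ℕ)) - n₂ := (Int.modEq_iff_dvd).mp hc2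
        have := dvd_sub d1 d2
        have he : (a + ∑ i ∈ B, b i * 3^(i:ℕ)) - n₁ -
            ((a + ∑ i ∈ Bᶜ, b i * 3^(i:ℕ)) - n₂)
            = ((∑ i ∈ B, b i * 3^(i:ℕ)) - ∑ i ∈ Bᶜ, b i * 3^(i:ℕ)) - (n₁ - n₂) := by
          ring
        rwa [he] at this
    · rintro ⟨hmem, hdvd⟩
      set B : Finset (Fin f) := Finset.univ.filter (fun i => 0 < c i) with hB
      set b : Fin f → ℤ := fun i => if 0 < c i then c i else -c i with hb
      set a : ℤ := (n₁ - ∑ i ∈ B, b i * 3^(i:ℕ)) % M with ha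
      have hφeq : φ (a, b, B) = c := by
        funext i
        simp only [hφ, hb, hB, Finset.mem_filter, Finset.mem_univ, true_and]
        by_cases hpos : 0 < c i
        · rw [if_pos hpos, if_pos hpos]
        · rw [if_neg hpos, if_neg hpos]; ring
      have hbmem : ∀ i, 1 ≤ b i ∧ b i ≤ 3 := by
        intro i
        have := mem_Cset.mp (hmem i)
        simp only [hb]
        split <;> omega
      have had : M ∣ (n₁ - ∑ i ∈ B, b i * 3^(i:ℕ)) - a :=
        Int.dvd_self_sub_of_emod_eq rfl
      refine ⟨(a, b, B), ⟨⟨?_, ?_⟩, hbmem, ?_, ?_⟩, hφeq⟩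
      · exact Int.emod_nonneg _ (by omega)
      · have := Int.emod_lt_of_pos (n₁ - ∑ i ∈ B, b i * 3^(i:ℕ)) (show (0:ℤ) < M by omega)
        omega
      · rw [Int.modEq_iff_dvd]
        have he : a + (∑ i ∈ B, b i * 3^(i:ℕ)) - n₁
            = -((n₁ - ∑ i ∈ B, b i * 3^(i:ℕ)) - a) := by ring
        rw [he]
        exact had.neg_right
      · rw [Int.modEq_iff_dvd]
        have hsplit : (∑ i ∈ B, b i * 3^(i:ℕ)) - ∑ i ∈ Bᶜ, b i * 3^(i:ℕ)
            = ∑ i : Fin f, c i * 3^(i:ℕ) := by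
          rw [← sign_split]
          apply Finset.sum_congr rfl
          intro i _
          congr 1
          exact congrFun hφeq i
        have hdvd2 : M ∣ ((∑ i ∈ B, b i * 3^(i:ℕ)) - ∑ i ∈ Bᶜ, b i * 3^(i:ℕ)) - (n₁ - n₂) := by
          rw [hsplit]; exact hdvd
        have he : a + (∑ i ∈ Bᶜ, b i * 3^(i:ℕ)) - n₂
            = -(((n₁ - ∑ i ∈ B, b i * 3^(i:ℕ)) - a)
              + (((∑ i ∈ B, b i * 3^(i:ℕ)) - ∑ i ∈ Bᶜ, b i * 3^(i:ℕ)) - (n₁ - n₂))) := by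
          ring
        rw [he]
        exact dvd_neg.mpr (dvd_add had hdvd2)
  calc (Tset2 f n₁ n₂).ncard = (φ '' (Tset2 f n₁ n₂)).ncard :=
        (Set.ncard_image_of_injOn hinj).symm
    _ = (Gset f (n₁ - n₂)).card := by rw [himg, Set.ncard_coe_finset]

lemma sE_sO' (f : ℕ) : (Even f → 4 * sig (evens f) = hsum f ∧ 4 * sig (odds f) = 3 * hsum f) ∧
    (¬ Even f → 4 * sig (evens f) = 3 * hsum f + 1 ∧ 4 * sig (odds f) = hsum f - 1) := by
  rw [sig_evens, sig_odds]
  exact sE_sO f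

lemma hsum_gt_one {f : ℕ} (hf : 2 ≤ f) : 1 < hsum f := by
  have h2 := two_hsum f
  have : (3:ℤ)^2 ≤ 3^f := pow_le_pow_right₀ (by norm_num) hf
  norm_num at this
  omega

lemma sAlt_eq {f : ℕ} (B : Finset (Fin f)) :
    sAlt f B = sig (B.filter (fun i : Fin f => Even (i:ℕ))) - sig (B.filter (fun i : Fin f => ¬ Even (i:ℕ))) := by
  rw [sAlt, ← Finset.sum_filter_add_sum_filter_not B (fun i : Fin f => Even (i:ℕ))]
  have h1 : ∑ i ∈ B.filter (fun i : Fin f => Even (i:ℕ)), (-1:ℤ)^(i:ℕ) * 3^(i:ℕ)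
      = sig (B.filter (fun i : Fin f => Even (i:ℕ))) := by
    rw [sig]
    refine Finset.sum_congr rfl fun i hi => ?_
    rw [Finset.mem_filter] at hi
    rw [hi.2.neg_one_pow, one_mul]
  have h2 : ∑ i ∈ B.filter (fun i : Fin f => ¬ Even (i:ℕ)), (-1:ℤ)^(i:ℕ) * 3^(i:ℕ)
      = - sig (B.filter (fun i : Fin f => ¬ Even (i:ℕ))) := by
    rw [sig, ← Finset.sum_neg_distrib]
    refine Finset.sum_congr rfl fun i hi => ?_
    rw [Finset.mem_filter] at hi
    rw [(Nat.not_even_iff_odd.mp hi.2).neg_one_pow]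
    ring
  rw [h1, h2]
  ring

lemma sig_symmDiff_odds {f : ℕ} (B : Finset (Fin f)) :
    sig (B ∆ odds f) = sig (B.filter (fun i : Fin f => Even (i:ℕ))) + sig (odds f)
      - sig (B.filter (fun i : Fin f => ¬ Even (i:ℕ))) := by
  have key : ∀ i : Fin f, ind (B ∆ odds f) i
      = ind (B.filter (fun i : Fin f => Even (i:ℕ))) i + ind (odds f) i
        - ind (B.filter (fun i : Fin f => ¬ Even (i:ℕ))) i := by
    intro i
    by_cases he : Even (i:ℕ) <;> by_cases hb : i ∈ B <;>
      simp [ind, Finset.mem_symmDiff, Finset.mem_filter, odds, he, hb, Nat.not_even_iff_odd]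
  rw [sig_eq, sig_eq, sig_eq, sig_eq]
  rw [show ∑ i : Fin f, ind (B ∆ odds f) i * 3^(i:ℕ)
      = ∑ i : Fin f, (ind (B.filter (fun i : Fin f => Even (i:ℕ))) i + ind (odds f) i
        - ind (B.filter (fun i : Fin f => ¬ Even (i:ℕ))) i) * 3^(i:ℕ) from
    Finset.sum_congr rfl fun i _ => by rw [key i]]
  rw [Finset.sum_congr rfl (fun i (_ : i ∈ Finset.univ) => (by ring :
    (ind (B.filter (fun i : Fin f => Even (i:ℕ))) i + ind (odds f) i
        - ind (B.filter (fun i : Fin f => ¬ Even (i:ℕ))) i) * 3^(i:ℕ)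
    = ind (B.filter (fun i : Fin f => Even (i:ℕ))) i * 3^(i:ℕ) + ind (odds f) i * 3^(i:ℕ)
        - ind (B.filter (fun i : Fin f => ¬ Even (i:ℕ))) i * 3^(i:ℕ)))]
  rw [Finset.sum_sub_distrib, Finset.sum_add_distrib]

lemma rel_even {f : ℕ} (hev : Even f) (B : Finset (Fin f)) :
    ((3:ℤ)^f - 1) ∣ (4 * sig (B ∆ odds f) + hsum f) - 4 * sAlt f B := by
  have hO := ((sE_sO' f).1 hev).2
  have hM := two_hsum f
  have h1 := sig_symmDiff_odds B
  have h2 := sAlt_eq B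
  refine ⟨2, ?_⟩
  linarith

lemma rel_odd {f : ℕ} (hodd : ¬ Even f) (B : Finset (Fin f)) :
    ((3:ℤ)^f - 1) ∣ (4 * sig (B ∆ odds f) + hsum f) - (-1 + 4 * sAlt f B) := by
  have hO := ((sE_sO' f).2 hodd).2
  have hM := two_hsum f
  have h1 := sig_symmDiff_odds B
  have h2 := sAlt_eq B
  refine ⟨1, ?_⟩
  linarith

lemma evens_symmDiff_odds (f : ℕ) : evens f ∆ odds f = Finset.univ := by
  ext i
  by_cases he : Even (i:ℕ)
  · simp [Finset.mem_symmDiff, evens, odds, he]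
  · simp [Finset.mem_symmDiff, evens, odds, he, Nat.not_even_iff_odd.mp he]

lemma sd_cancel {f : ℕ} (B : Finset (Fin f)) : (B ∆ odds f) ∆ odds f = B :=
  symmDiff_symmDiff_cancel_right (odds f) B

lemma sd_inj {f : ℕ} (B₁ B₂ : Finset (Fin f)) (h : B₁ ∆ odds f = B₂ ∆ odds f) : B₁ = B₂ := by
  have := congrArg (fun X => X ∆ odds f) h
  simpa [sd_cancel] using this

lemma empty_sd (f : ℕ) : (∅ : Finset (Fin f)) ∆ odds f = odds f := by
  simp

lemma univ_sd (f : ℕ) : (Finset.univ : Finset (Fin f)) ∆ odds f = evens f := by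
  have := congrArg (fun X => X ∆ odds f) (evens_symmDiff_odds f)
  simpa [sd_cancel] using this.symm

lemma mem_evens_zero {f : ℕ} (hf : 0 < f) : (⟨0, hf⟩ : Fin f) ∈ evens f := by
  simp [evens]

lemma notMem_odds_zero {f : ℕ} (hf : 0 < f) : (⟨0, hf⟩ : Fin f) ∉ odds f := by
  simp [odds]

lemma evens_ne_odds {f : ℕ} (hf : 0 < f) : evens f ≠ odds f := fun h =>
  notMem_odds_zero hf (h ▸ mem_evens_zero hf)

lemma evens_ne_empty {f : ℕ} (hf : 0 < f) : evens f ≠ ∅ := fun h => by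
  have := mem_evens_zero hf; rw [h] at this; simp at this

lemma odds_ne_univ {f : ℕ} (hf : 0 < f) : odds f ≠ Finset.univ := fun h =>
  notMem_odds_zero hf (h ▸ Finset.mem_univ _)

lemma mem_odds_one {f : ℕ} (hf : 1 < f) : (⟨1, hf⟩ : Fin f) ∈ odds f := by
  simp [odds]

lemma odds_ne_empty {f : ℕ} (hf : 1 < f) : odds f ≠ ∅ := fun h => by
  have := mem_odds_one hf; rw [h] at this; simp at this

lemma evens_ne_univ {f : ℕ} (hf : 1 < f) : evens f ≠ Finset.univ := fun h => by
  have : (⟨1, hf⟩ : Fin f) ∈ evens f := h ▸ Finset.mem_univ _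
  simp [evens] at this

lemma notdvd {f : ℕ} (hf : 0 < f) (hh : 1 < hsum f) (B : Finset (Fin f))
    (h0 : B ≠ ∅) (h1 : B ≠ Finset.univ) (hE : B ≠ evens f) (hO : B ≠ odds f) :
    ¬ (hsum f ∣ 4 * sig B) := by
  rintro ⟨k, hk⟩
  have hb0 := sig_nonneg B
  have hb1 := sig_le B
  have hk0 : 0 ≤ k := by nlinarith
  have hk4 : k ≤ 4 := by nlinarith
  have hEO := sE_sO' f
  interval_cases k
  · exact h0 (sig_inj B ∅ (by
      have hemp : sig (∅ : Finset (Fin f)) = 0 := rfl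
      linarith))
  · by_cases hev : Even f
    · obtain ⟨e1, _⟩ := hEO.1 hev
      exact hE (sig_inj B (evens f) (by linarith))
    · obtain ⟨e1, e2⟩ := hEO.2 hev
      omega
  · by_cases hev : Even f
    · obtain ⟨e1, _⟩ := hEO.1 hev
      have key : sig B + sig (∅ : Finset (Fin f)) = sig (evens f) + sig (evens f) := by
        have hemp : sig (∅ : Finset (Fin f)) = 0 := rfl
        linarith
      have hd := two_digit_eq B ∅ (evens f) (evens f) key ⟨0, hf⟩
      have hindE : ind (evens f) ⟨0, hf⟩ = 1 := by
        simp [ind, mem_evens_zero hf]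
      have hind0 : ind (∅ : Finset (Fin f)) ⟨0, hf⟩ = 0 := by simp [ind]
      have : ind B ⟨0, hf⟩ ≤ 1 := by unfold ind; split <;> omega
      have : 0 ≤ ind B ⟨0, hf⟩ := by unfold ind; split <;> omega
      omega
    · obtain ⟨e1, e2⟩ := hEO.2 hev
      omega
  · by_cases hev : Even f
    · obtain ⟨_, e2⟩ := hEO.1 hev
      exact hO (sig_inj B (odds f) (by linarith))
    · obtain ⟨e1, e2⟩ := hEO.2 hev
      omega
  · exact h1 (sig_inj B Finset.univ (by rw [sig_univ]; linarith))


lemma card_everything (f : ℕ) (hf : 0 < f) (n₁ n₂ : ℤ) :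
    (Tset2 f n₁ n₂).ncard = 2^f + cnt f (n₁ - n₂) := by
  rw [ncard_Tset2 f hf, card_Gset f hf]

lemma sig_empty' (f : ℕ) : sig (∅ : Finset (Fin f)) = 0 := rfl

lemma sd_eq {f : ℕ} {B X : Finset (Fin f)} (h : B ∆ odds f = X) : B = X ∆ odds f := by
  rw [← h, sd_cancel]

lemma odds_sd (f : ℕ) : odds f ∆ odds f = ∅ := symmDiff_self (odds f)

lemma f_one_reduce {f : ℕ} (hf1 : f = 1) (B : Finset (Fin f)) :
    B = evens f ∨ B = odds f := by
  subst hf1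
  have he : evens 1 = Finset.univ := by
    apply Finset.eq_univ_iff_forall.mpr
    intro i
    have h0 : (i : ℕ) = 0 := by omega
    simp [evens, h0]
    exact Subsingleton.elim i 0
  have ho : odds 1 = ∅ := by
    apply Finset.eq_empty_iff_forall_notMem.mpr
    intro i
    have h0 : (i : ℕ) = 0 := by omega
    simp [odds, h0]
  rcases B.eq_empty_or_nonempty with h | h
  · right; rw [ho, h]
  · left
    rw [he]
    apply Finset.eq_univ_iff_forall.mpr
    intro i
    obtain ⟨x, hx⟩ := h
    rwa [Subsingleton.elim i x]

lemma even_gt_one {f : ℕ} (hf : 0 < f) (hev : Even f) : 1 < f := by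
  rcases hev with ⟨k, hk⟩; omega

lemma cnt_half {f : ℕ} (hf : 0 < f) {n : ℤ} (h : ((3:ℤ)^f - 1) ∣ hsum f - n) :
    cnt f n = 2 := by
  classical
  have hM := two_hsum f
  have hset : (Finset.univ.filter (fun B : Finset (Fin f) =>
      ((3:ℤ)^f - 1) ∣ (4 * sig B + hsum f - n))) = {∅, Finset.univ} := by
    ext B
    simp only [Finset.mem_filter, Finset.mem_univ, true_and, Finset.mem_insert,
      Finset.mem_singleton]
    constructor
    · intro hd
      have hdd : ((3:ℤ)^f - 1) ∣ 4 * sig B - 4 * sig (∅ : Finset (Fin f)) := by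
        rw [show 4 * sig B - 4 * sig (∅ : Finset (Fin f))
            = (4 * sig B + hsum f - n) - (hsum f - n) from by rw [sig_empty']; ring]
        exact dvd_sub hd h
      rcases collision hf B ∅ hdd with h1 | ⟨h1, h2⟩ | ⟨h1, h2⟩ | ⟨hev, hcase⟩
      · left; exact h1
      · left; exact h1
      · right; exact h1
      · exfalso
        have hf2 := even_gt_one hf hev
        rcases hcase with ⟨_, h2⟩ | ⟨_, h2⟩
        · exact odds_ne_empty hf2 h2.symm
        · exact evens_ne_empty hf h2.symm
    · rintro (rfl | rfl)
      · rw [show 4 * sig (∅ : Finset (Fin f)) + hsum f - n = hsum f - n from by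
          rw [sig_empty']; ring]
        exact h
      · rw [show 4 * sig (Finset.univ : Finset (Fin f)) + hsum f - n
            = 2 * ((3:ℤ)^f - 1) + (hsum f - n) from by rw [sig_univ]; linarith]
        exact dvd_add (⟨2, by ring⟩ : ((3:ℤ)^f - 1) ∣ 2 * ((3:ℤ)^f - 1)) h
  rw [cnt, hset]
  haveI : Nonempty (Fin f) := ⟨⟨0, hf⟩⟩
  rw [Finset.card_insert_of_notMem (by simp [Finset.univ_nonempty.ne_empty, Ne.symm]),
    Finset.card_singleton]

lemma cnt_zero {f : ℕ} (hf : 0 < f) (hev : Even f) {n : ℤ} (h : ((3:ℤ)^f - 1) ∣ n) :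
    cnt f n = 2 := by
  classical
  have hM := two_hsum f
  have hf2 := even_gt_one hf hev
  obtain ⟨e1, e2⟩ := (sE_sO' f).1 hev
  have hset : (Finset.univ.filter (fun B : Finset (Fin f) =>
      ((3:ℤ)^f - 1) ∣ (4 * sig B + hsum f - n))) = {evens f, odds f} := by
    ext B
    simp only [Finset.mem_filter, Finset.mem_univ, true_and, Finset.mem_insert,
      Finset.mem_singleton]
    constructor
    · intro hd
      have hdd : ((3:ℤ)^f - 1) ∣ 4 * sig B - 4 * sig (evens f) := by
        rw [show 4 * sig B - 4 * sig (evens f)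
            = ((4 * sig B + hsum f - n) + n) - ((3:ℤ)^f - 1) from by linarith]
        exact dvd_sub (dvd_add hd h) dvd_rfl
      rcases collision hf B (evens f) hdd with h1 | ⟨h1, h2⟩ | ⟨h1, h2⟩ | ⟨_, hcase⟩
      · left; exact h1
      · exact absurd h2 (evens_ne_univ hf2)
      · exact absurd h2 (evens_ne_empty hf)
      · rcases hcase with ⟨h1, h2⟩ | ⟨h1, h2⟩
        · exact absurd h2 (evens_ne_odds hf)
        · right; exact h1
    · rintro (rfl | rfl)
      · rw [show 4 * sig (evens f) + hsum f - n = ((3:ℤ)^f - 1) - n from by linarith]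
        exact dvd_sub dvd_rfl h
      · rw [show 4 * sig (odds f) + hsum f - n = 2 * ((3:ℤ)^f - 1) - n from by linarith]
        exact dvd_sub (⟨2, by ring⟩ : ((3:ℤ)^f - 1) ∣ 2 * ((3:ℤ)^f - 1)) h
  rw [cnt, hset]
  rw [Finset.card_insert_of_notMem (by simp [evens_ne_odds hf]), Finset.card_singleton]

lemma cnt_one {f : ℕ} (hf : 0 < f) (C : Finset (Fin f)) {n : ℤ}
    (hC0 : C ≠ ∅) (hC1 : C ≠ Finset.univ)
    (hCEO : Even f → C ≠ evens f ∧ C ≠ odds f)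
    (h : ((3:ℤ)^f - 1) ∣ 4 * sig C + hsum f - n) :
    cnt f n = 1 := by
  classical
  have hset : (Finset.univ.filter (fun B : Finset (Fin f) =>
      ((3:ℤ)^f - 1) ∣ (4 * sig B + hsum f - n))) = {C} := by
    ext B
    simp only [Finset.mem_filter, Finset.mem_univ, true_and, Finset.mem_singleton]
    constructor
    · intro hd
      have hdd : ((3:ℤ)^f - 1) ∣ 4 * sig B - 4 * sig C := by
        rw [show 4 * sig B - 4 * sig C
            = (4 * sig B + hsum f - n) - (4 * sig C + hsum f - n) from by ring]
        exact dvd_sub hd h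
      rcases collision hf B C hdd with h1 | ⟨h1, h2⟩ | ⟨h1, h2⟩ | ⟨hev, hcase⟩
      · exact h1
      · exact absurd h2 hC1
      · exact absurd h2 hC0
      · rcases hcase with ⟨h1, h2⟩ | ⟨h1, h2⟩
        · exact absurd h2 (hCEO hev).2
        · exact absurd h2 (hCEO hev).1
    · rintro rfl; exact h
  rw [cnt, hset, Finset.card_singleton]

lemma cnt_zero' {f : ℕ} (hf : 0 < f) {n : ℤ}
    (hnot : ¬ ((Int.ModEq ((3 : ℤ) ^ f - 1) n 0 ∧ Even f) ∨
          Int.ModEq ((3 : ℤ) ^ f - 1) n (((3 : ℤ) ^ f - 1) / 2)))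
    (hnotA : ¬ inA f n) : cnt f n = 0 := by
  classical
  have hM := two_hsum f
  have hdiv : ((3:ℤ)^f - 1) / 2 = hsum f := by omega
  rw [cnt, Finset.card_eq_zero]
  apply Finset.eq_empty_iff_forall_notMem.mpr
  intro B hB
  rw [Finset.mem_filter] at hB
  have hd := hB.2
  by_cases hB0 : B = ∅
  · subst hB0
    apply hnot
    right
    rw [Int.modEq_iff_dvd, hdiv]
    rw [show hsum f - n = 4 * sig (∅ : Finset (Fin f)) + hsum f - n from by
      rw [sig_empty']; ring]
    exact hd
  by_cases hB1 : B = Finset.univ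
  · subst hB1
    apply hnot
    right
    rw [Int.modEq_iff_dvd, hdiv]
    rw [show hsum f - n = (4 * sig (Finset.univ : Finset (Fin f)) + hsum f - n)
        - 2 * ((3:ℤ)^f - 1) from by rw [sig_univ]; linarith]
    exact dvd_sub hd (⟨2, by ring⟩ : ((3:ℤ)^f - 1) ∣ 2 * ((3:ℤ)^f - 1))
  by_cases hev : Even f
  · obtain ⟨e1, e2⟩ := (sE_sO' f).1 hev
    by_cases hBE : B = evens f
    · subst hBE
      apply hnot
      left
      refine ⟨?_, hev⟩
      rw [Int.modEq_iff_dvd]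
      rw [show (0:ℤ) - n = (4 * sig (evens f) + hsum f - n) - ((3:ℤ)^f - 1) from by linarith]
      exact dvd_sub hd dvd_rfl
    by_cases hBO : B = odds f
    · subst hBO
      apply hnot
      left
      refine ⟨?_, hev⟩
      rw [Int.modEq_iff_dvd]
      rw [show (0:ℤ) - n = (4 * sig (odds f) + hsum f - n) - 2 * ((3:ℤ)^f - 1) from by linarith]
      exact dvd_sub hd (⟨2, by ring⟩ : ((3:ℤ)^f - 1) ∣ 2 * ((3:ℤ)^f - 1))
    -- generic, f even
    apply hnotA
    right
    refine ⟨hev, B ∆ odds f, ?_, ?_, ?_, ?_, ?_⟩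
    · rw [Finset.nonempty_iff_ne_empty]
      intro hc
      exact hBO (by rw [sd_eq hc, empty_sd])
    · intro hc
      exact hBE (by rw [sd_eq hc, univ_sd])
    · intro hc
      exact hB1 (by rw [sd_eq hc, evens_symmDiff_odds])
    · intro hc
      exact hB0 (by rw [sd_eq hc, odds_sd])
    · rw [Int.modEq_iff_dvd]
      have hrel := rel_even hev (B ∆ odds f)
      rw [sd_cancel] at hrel
      rw [show 4 * sAlt f (B ∆ odds f) - n
          = (4 * sig B + hsum f - n) - ((4 * sig B + hsum f) - 4 * sAlt f (B ∆ odds f))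
          from by ring]
      exact dvd_sub hd hrel
  · -- generic, f odd
    apply hnotA
    left
    refine ⟨Nat.not_even_iff_odd.mp hev, B ∆ odds f, ?_, ?_, ?_⟩
    · intro hc
      exact hB1 (by rw [sd_eq hc, evens_symmDiff_odds])
    · intro hc
      exact hB0 (by rw [sd_eq hc, odds_sd])
    · rw [Int.modEq_iff_dvd]
      have hrel := rel_odd hev (B ∆ odds f)
      rw [sd_cancel] at hrel
      rw [show (-1 + 4 * sAlt f (B ∆ odds f)) - n
          = (4 * sig B + hsum f - n)
            - ((4 * sig B + hsum f) - (-1 + 4 * sAlt f (B ∆ odds f))) from by ring]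
      exact dvd_sub hd hrel


/-- Suppose `ℓ = 3`.  If `f` is odd the classes `−1 + 4·s(B*) mod 3^f−1` are
pairwise distinct and none is congruent to `0` modulo `(3^f−1)/2` as `B*` runs
over subsets other than `{0,2,…,f−1}` and `{1,3,…,f−2}`; if `f` is even the
classes `4·s(B*) mod 3^f−1` are pairwise distinct and none is congruent to `0`
modulo `(3^f−1)/2` as `B*` runs over nonempty proper subsets other than
`{0,2,…,f−2}` and `{1,3,…,f−1}`.  For all `n₁, n₂` with `n = n₁ − n₂`:
`M(n₁,n₂) = 2^f + 2` if `n ≡ 0 (mod 3^f−1)` and `f` even, or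
`n ≡ (3^f−1)/2 (mod 3^f−1)`; `M(n₁,n₂) = 2^f + 1` if the class of `n` lies in
`A`; and `M(n₁,n₂) = 2^f` otherwise. -/
theorem stmt16 (f : ℕ) (hf : 0 < f) :
    (Odd f →
      (∀ B₁ B₂ : Finset (Fin f), B₁ ≠ evens f → B₁ ≠ odds f →
        B₂ ≠ evens f → B₂ ≠ odds f →
        Int.ModEq ((3 : ℤ) ^ f - 1) (-1 + 4 * sAlt f B₁)
          (-1 + 4 * sAlt f B₂) → B₁ = B₂) ∧
      (∀ B : Finset (Fin f), B ≠ evens f → B ≠ odds f →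
        ¬ Int.ModEq (((3 : ℤ) ^ f - 1) / 2) (-1 + 4 * sAlt f B) 0)) ∧
    (Even f →
      (∀ B₁ B₂ : Finset (Fin f),
        B₁.Nonempty → B₁ ≠ Finset.univ → B₁ ≠ evens f → B₁ ≠ odds f →
        B₂.Nonempty → B₂ ≠ Finset.univ → B₂ ≠ evens f → B₂ ≠ odds f →
        Int.ModEq ((3 : ℤ) ^ f - 1) (4 * sAlt f B₁) (4 * sAlt f B₂) →
          B₁ = B₂) ∧
      (∀ B : Finset (Fin f),
        B.Nonempty → B ≠ Finset.univ → B ≠ evens f → B ≠ odds f →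
        ¬ Int.ModEq (((3 : ℤ) ^ f - 1) / 2) (4 * sAlt f B) 0)) ∧
    (∀ n₁ n₂ : ℤ,
      (((Int.ModEq ((3 : ℤ) ^ f - 1) (n₁ - n₂) 0 ∧ Even f) ∨
          Int.ModEq ((3 : ℤ) ^ f - 1) (n₁ - n₂) (((3 : ℤ) ^ f - 1) / 2)) →
        (Tset2 f n₁ n₂).ncard = 2 ^ f + 2) ∧
      (inA f (n₁ - n₂) → (Tset2 f n₁ n₂).ncard = 2 ^ f + 1) ∧
      (¬ ((Int.ModEq ((3 : ℤ) ^ f - 1) (n₁ - n₂) 0 ∧ Even f) ∨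
          Int.ModEq ((3 : ℤ) ^ f - 1) (n₁ - n₂) (((3 : ℤ) ^ f - 1) / 2)) →
        ¬ inA f (n₁ - n₂) → (Tset2 f n₁ n₂).ncard = 2 ^ f)) := by
  have hM := two_hsum f
  have hdiv : ((3:ℤ)^f - 1) / 2 = hsum f := by omega
  refine ⟨?_, ?_, ?_⟩
  · -- f odd
    intro hodd
    have hne : ¬ Even f := Nat.not_even_iff_odd.mpr hodd
    have hf1 : f ≠ 1 → 2 ≤ f := by omega
    constructor
    · intro B₁ B₂ h1E h1O h2E h2O hmod
      have dM := Int.modEq_iff_dvd.mp hmod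
      have r1 := rel_odd hne B₁
      have r2 := rel_odd hne B₂
      have hdd : ((3:ℤ)^f - 1) ∣ 4 * sig (B₁ ∆ odds f) - 4 * sig (B₂ ∆ odds f) := by
        rw [show 4 * sig (B₁ ∆ odds f) - 4 * sig (B₂ ∆ odds f)
            = ((4 * sig (B₁ ∆ odds f) + hsum f) - (-1 + 4 * sAlt f B₁))
              - ((4 * sig (B₂ ∆ odds f) + hsum f) - (-1 + 4 * sAlt f B₂))
              - ((-1 + 4 * sAlt f B₂) - (-1 + 4 * sAlt f B₁)) from by ring]
        exact dvd_sub (dvd_sub r1 r2) dM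
      rcases collision hf _ _ hdd with h1 | ⟨h1, h2⟩ | ⟨h1, h2⟩ | ⟨hev, _⟩
      · have := congrArg (fun X => X ∆ odds f) h1
        simpa [sd_cancel] using this
      · exact absurd (by rw [sd_eq h1, empty_sd]) h1O
      · exact absurd (by rw [sd_eq h1, univ_sd]) h1E
      · exact absurd hev hne
    · intro B hBE hBO hmod
      rcases eq_or_ne f 1 with hf1' | hf1'
      · rcases f_one_reduce hf1' B with h | h
        · exact hBE h
        · exact hBO h
      have hh := hsum_gt_one (hf1 hf1')
      rw [hdiv] at hmod
      have hdvd : hsum f ∣ (-1 + 4 * sAlt f B) := by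
        have := Int.modEq_iff_dvd.mp hmod
        simpa using this.neg_right
      have hhM : hsum f ∣ ((3:ℤ)^f - 1) := ⟨2, by linarith⟩
      have hrel := rel_odd hne B
      have h2 : hsum f ∣ 4 * sig (B ∆ odds f) := by
        rw [show 4 * sig (B ∆ odds f)
            = (((4 * sig (B ∆ odds f) + hsum f) - (-1 + 4 * sAlt f B))
              + (-1 + 4 * sAlt f B)) - hsum f from by ring]
        exact dvd_sub (dvd_add (hhM.trans hrel) hdvd) dvd_rfl
      obtain ⟨e1, e2⟩ := (sE_sO' f).2 hne
      have hone : ¬ (hsum f ∣ 1) := fun hc => by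
        have := Int.le_of_dvd one_pos hc
        omega
      by_cases hCE : B ∆ odds f = evens f
      · rw [hCE, e1] at h2
        exact hone (by
          rw [show (1:ℤ) = (3 * hsum f + 1) - hsum f * 3 from by ring]
          exact dvd_sub h2 ⟨3, rfl⟩)
      by_cases hCO : B ∆ odds f = odds f
      · rw [hCO, e2] at h2
        exact hone (by
          rw [show (1:ℤ) = hsum f * 1 - (hsum f - 1) from by ring]
          exact dvd_sub ⟨1, rfl⟩ h2)
      refine notdvd hf hh (B ∆ odds f) ?_ ?_ hCE hCO h2
      · intro hc
        exact hBO (by rw [sd_eq hc, empty_sd])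
      · intro hc
        exact hBE (by rw [sd_eq hc, univ_sd])
  · -- f even
    intro hev
    have hf2 : 2 ≤ f := even_gt_one hf hev
    constructor
    · intro B₁ B₂ h1ne h1univ h1E h1O B₂ne h2univ h2E h2O hmod
      have dM := Int.modEq_iff_dvd.mp hmod
      have r1 := rel_even hev B₁
      have r2 := rel_even hev B₂
      have hdd : ((3:ℤ)^f - 1) ∣ 4 * sig (B₁ ∆ odds f) - 4 * sig (B₂ ∆ odds f) := by
        rw [show 4 * sig (B₁ ∆ odds f) - 4 * sig (B₂ ∆ odds f)
            = ((4 * sig (B₁ ∆ odds f) + hsum f) - 4 * sAlt f B₁)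
              - ((4 * sig (B₂ ∆ odds f) + hsum f) - 4 * sAlt f B₂)
              - (4 * sAlt f B₂ - 4 * sAlt f B₁) from by ring]
        exact dvd_sub (dvd_sub r1 r2) dM
      rcases collision hf _ _ hdd with h1 | ⟨h1, h2⟩ | ⟨h1, h2⟩ | ⟨_, hcase⟩
      · have := congrArg (fun X => X ∆ odds f) h1
        simpa [sd_cancel] using this
      · exact absurd (by rw [sd_eq h1, empty_sd]) h1O
      · exact absurd (by rw [sd_eq h1, univ_sd]) h1E
      · rcases hcase with ⟨h1, _⟩ | ⟨h1, _⟩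
        · exact absurd (by rw [sd_eq h1, evens_symmDiff_odds]) h1univ
        · exact absurd (by rw [sd_eq h1, odds_sd]) h1ne.ne_empty
    · intro B hBne hBuniv hBE hBO hmod
      have hh := hsum_gt_one hf2
      rw [hdiv] at hmod
      have hdvd : hsum f ∣ (4 * sAlt f B) := by
        have := Int.modEq_iff_dvd.mp hmod
        simpa using this.neg_right
      have hhM : hsum f ∣ ((3:ℤ)^f - 1) := ⟨2, by linarith⟩
      have hrel := rel_even hev B
      have h2 : hsum f ∣ 4 * sig (B ∆ odds f) := by
        rw [show 4 * sig (B ∆ odds f)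
            = (((4 * sig (B ∆ odds f) + hsum f) - 4 * sAlt f B)
              + 4 * sAlt f B) - hsum f from by ring]
        exact dvd_sub (dvd_add (hhM.trans hrel) hdvd) dvd_rfl
      refine notdvd hf hh (B ∆ odds f) ?_ ?_ ?_ ?_ h2
      · intro hc
        exact hBO (by rw [sd_eq hc, empty_sd])
      · intro hc
        exact hBE (by rw [sd_eq hc, univ_sd])
      · intro hc
        exact hBuniv (by rw [sd_eq hc, evens_symmDiff_odds])
      · intro hc
        exact hBne.ne_empty (by rw [sd_eq hc, odds_sd])
  · -- counting
    intro n₁ n₂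
    have hcard := card_everything f hf n₁ n₂
    refine ⟨?_, ?_, ?_⟩
    · rintro (⟨h0, hev⟩ | hh')
      · have hn : ((3:ℤ)^f - 1) ∣ (n₁ - n₂) := by
          have h' := Int.modEq_iff_dvd.mp h0
          rw [zero_sub] at h'
          exact dvd_neg.mp h'
        rw [hcard, cnt_zero hf hev hn]
      · have hn : ((3:ℤ)^f - 1) ∣ hsum f - (n₁ - n₂) := by
          have h' := Int.modEq_iff_dvd.mp hh'
          rwa [hdiv] at h'
        rw [hcard, cnt_half hf hn]
    · rintro (⟨hodd, B, hBE, hBO, hmod⟩ | ⟨hev, B, hBne, hBuniv, hBE, hBO, hmod⟩)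
      · have hne : ¬ Even f := Nat.not_even_iff_odd.mpr hodd
        have hrel := rel_odd hne B
        have hmod' := Int.modEq_iff_dvd.mp hmod
        have hd : ((3:ℤ)^f - 1) ∣ 4 * sig (B ∆ odds f) + hsum f - (n₁ - n₂) := by
          rw [show 4 * sig (B ∆ odds f) + hsum f - (n₁ - n₂)
              = ((4 * sig (B ∆ odds f) + hsum f) - (-1 + 4 * sAlt f B))
                + ((-1 + 4 * sAlt f B) - (n₁ - n₂)) from by ring]
          exact dvd_add hrel hmod'
        rw [hcard, cnt_one hf (B ∆ odds f) ?_ ?_ (fun h => absurd h hne) hd]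
        · intro hc
          exact hBO (by rw [sd_eq hc, empty_sd])
        · intro hc
          exact hBE (by rw [sd_eq hc, univ_sd])
      · have hrel := rel_even hev B
        have hmod' := Int.modEq_iff_dvd.mp hmod
        have hd : ((3:ℤ)^f - 1) ∣ 4 * sig (B ∆ odds f) + hsum f - (n₁ - n₂) := by
          rw [show 4 * sig (B ∆ odds f) + hsum f - (n₁ - n₂)
              = ((4 * sig (B ∆ odds f) + hsum f) - 4 * sAlt f B)
                + (4 * sAlt f B - (n₁ - n₂)) from by ring]
          exact dvd_add hrel hmod'
        rw [hcard, cnt_one hf (B ∆ odds f) ?_ ?_ ?_ hd]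
        · intro hc
          exact hBO (by rw [sd_eq hc, empty_sd])
        · intro hc
          exact hBE (by rw [sd_eq hc, univ_sd])
        · intro _
          constructor
          · intro hc
            exact hBuniv (by rw [sd_eq hc, evens_symmDiff_odds])
          · intro hc
            exact hBne.ne_empty (by rw [sd_eq hc, odds_sd])
    · intro hnot hnotA
      rw [hcard, cnt_zero' hf hnot hnotA]
      omega

end Stmt16
end

section
/- Suppose ℓ = 2 and f ≥ 2, and let n₁, n₂ be integers with n = n₁ − n₂. Then (all congruences modulo 2^f − 1): M(n₁,n₂) = 2^f + 4 if n ≡ 0 and f is even; M(n₁,n₂) = 2^f + 3 if n ≢ 0, 3 divides n, and f is even; M(n₁,n₂) = 2^f + 2 if n ≡ 0 and f is odd; M(n₁,n₂) = 2^f + 1 if n ≢ 0 and f is odd; and M(n₁,n₂) = 2^f if 3 does not divide n and f is even. -/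
/-!
Sending `(a, b, B)` to `(B, C)` with `C = {i | i ∈ B ↔ b i = 2}` identifies `T(n₁,n₂)` with the
pairs of subsets satisfying `n₁ - n₂ ≡ 3⟦B⟧ + ⟦C⟧`, where `⟦B⟧ = ∑_{i∈B} 2^i`: the two sums in
the definition differ by `3⟦B⟧ + ⟦C⟧ - 2(2^f - 1)`, and `a` is then pinned down by the first
congruence. Binary expansion turns this into counting `(s, t) ∈ [0, M]²` with
`3s + t ≡ n (mod M)`, `M = 2^f - 1`. Every `s` has one such `t`, and two (`t = 0` and `t = M`)
exactly when `3s ≡ n`. In `[0, M)` the congruence `3s ≡ n` has `gcd(3, M)` solutions if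
`gcd(3, M) ∣ n` and none otherwise, `s = M` is a solution exactly when `M ∣ n`, and `gcd(3, M)`
is `3` for even `f` and `1` for odd `f`.
-/

namespace Stmt17

/-- The set `T(n₁,n₂)` (with `ℓ = 2`) of triples `(a,b,B)` with
`a ∈ {0,…,2^f−2}`, `b ∈ {1,2}^f`, `B ⊆ {0,…,f−1}`, with
`n₁ ≡ a + ∑_{i∈B} b_i 2^i` and `n₂ ≡ a + ∑_{i∉B} b_i 2^i (mod 2^f−1)`. -/
def Tset2 (f : ℕ) (n₁ n₂ : ℤ) : Set (ℤ × (Fin f → ℤ) × Finset (Fin f)) :=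
  {x | (0 ≤ x.1 ∧ x.1 ≤ (2 : ℤ) ^ f - 2) ∧
    (∀ i, 1 ≤ x.2.1 i ∧ x.2.1 i ≤ (2 : ℤ)) ∧
    Int.ModEq ((2 : ℤ) ^ f - 1) n₁
      (x.1 + ∑ i ∈ x.2.2, x.2.1 i * (2 : ℤ) ^ (i : ℕ)) ∧
    Int.ModEq ((2 : ℤ) ^ f - 1) n₂
      (x.1 + ∑ i ∈ x.2.2ᶜ, x.2.1 i * (2 : ℤ) ^ (i : ℕ))}

open Finset

section LinearCongruence

variable {M : ℕ}

lemma card_filter_range_mul_modEq {m : ℕ} (hm : 0 < m) (d : ℕ) (v : ℤ) :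
    #{s ∈ range (d * m) | ((s : ℕ) : ℤ) ≡ v [ZMOD m]} = d := by
  have hv : ∀ s : ℕ, (s : ℤ) ≡ v [ZMOD m] ↔ s ≡ (v % m).toNat [MOD m] := by
    intro s
    rw [← Int.natCast_modEq_iff, Int.toNat_of_nonneg (Int.emod_nonneg v (by omega))]
    exact ⟨fun h => h.trans (Int.mod_modEq v m).symm, fun h => h.trans (Int.mod_modEq v m)⟩
  simp_rw [hv, ← Nat.count_eq_card_filter_range, Nat.count_modEq_card _ hm, Nat.mul_mod_left,
    Nat.mul_div_cancel _ hm]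
  simp

lemma card_filter_range_succ_modEq (hM : 0 < M) (c : ℤ) :
    #{t ∈ range (M + 1) | c ≡ ((t : ℕ) : ℤ) [ZMOD M]} = if (M : ℤ) ∣ c then 2 else 1 := by
  have hlt : #{t ∈ range M | c ≡ ((t : ℕ) : ℤ) [ZMOD M]} = 1 := by
    simpa [Int.modEq_comm] using card_filter_range_mul_modEq hM 1 c
  have htop : c ≡ M [ZMOD M] ↔ (M : ℤ) ∣ c := by rw [Int.modEq_iff_dvd, dvd_sub_self_left]
  rw [range_add_one, filter_insert]
  split_ifs with h₁ h₂ h₂ <;> simp_all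

lemma exists_dvd_sub_mul_iff_modEq {m a : ℤ} (h : Int.gcd a m = 1) (c : ℤ) :
    ∃ v, ∀ s, m ∣ c - a * s ↔ s ≡ v [ZMOD m] := by
  have hb := Int.gcd_eq_gcd_ab a m
  rw [h, Nat.cast_one] at hb
  refine ⟨Int.gcdA a m * c, fun s => ?_⟩
  rw [Int.modEq_iff_dvd]
  constructor
  · rintro ⟨k, hk⟩
    exact ⟨Int.gcdA a m * k - Int.gcdB a m * s, by linear_combination Int.gcdA a m * hk - s * hb⟩
  · rintro ⟨k, hk⟩
    exact ⟨Int.gcdB a m * c + a * k, by linear_combination a * hk + c * hb⟩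

theorem card_filter_range_dvd_sub_mul (hM : 0 < M) (a c : ℤ) :
    #{s ∈ range M | (M : ℤ) ∣ c - a * ((s : ℕ) : ℤ)} =
      if (Int.gcd a M : ℤ) ∣ c then Int.gcd a M else 0 := by
  set d := Int.gcd a M
  have hd : 0 < d := Int.gcd_pos_of_ne_zero_right a (by omega)
  obtain ⟨m, hm⟩ : d ∣ M := Int.natCast_dvd_natCast.mp (Int.gcd_dvd_right a M)
  obtain ⟨a', ha⟩ := Int.gcd_dvd_left a M
  have hcop : Int.gcd a' m = 1 := by
    have := Int.gcd_mul_left d a' m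
    rw [← ha, ← Nat.cast_mul, ← hm] at this
    exact (Nat.mul_eq_left hd.ne').mp this.symm
  split_ifs with hc
  · obtain ⟨c', rfl⟩ := hc
    obtain ⟨v, hv⟩ := exists_dvd_sub_mul_iff_modEq hcop c'
    have hm0 : 0 < m := Nat.pos_of_mul_pos_left (hm ▸ hM)
    have key : ∀ s : ℕ, (M : ℤ) ∣ d * c' - a * s ↔ (s : ℤ) ≡ v [ZMOD m] := fun s => by
      rw [hm, ha, Nat.cast_mul, mul_assoc, ← mul_sub, Int.mul_dvd_mul_iff_left (by positivity)]
      exact hv s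
    rw [filter_congr fun s _ => key s, hm, card_filter_range_mul_modEq hm0]
  · rw [card_eq_zero, filter_eq_empty_iff]
    intro s _ hs
    exact hc ((dvd_sub_left ((Int.gcd_dvd_left a M).mul_right _)).mp
      ((Int.gcd_dvd_right a M).trans hs))

lemma card_filter_modEq_mul_add (hM : 0 < M) (a c : ℤ) :
    #{q ∈ range (M + 1) ×ˢ range (M + 1) | c ≡ a * ((q.1 : ℕ) : ℤ) + q.2 [ZMOD M]} =
      M + 1 + (if (M : ℤ) ∣ c then 1 else 0) +
        if (Int.gcd a M : ℤ) ∣ c then Int.gcd a M else 0 := by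
  have hrow : ∀ s : ℕ, #{t ∈ range (M + 1) | c ≡ a * s + ((t : ℕ) : ℤ) [ZMOD M]} =
      1 + if (M : ℤ) ∣ c - a * s then 1 else 0 := fun s => by
    have hshift : ∀ t : ℤ, c ≡ a * s + t [ZMOD M] ↔ c - a * s ≡ t [ZMOD M] := fun t => by
      rw [Int.modEq_iff_dvd, Int.modEq_iff_dvd, sub_sub_eq_add_sub, add_comm t]
    simp_rw [hshift, card_filter_range_succ_modEq hM]
    split_ifs <;> rfl
  have hlast : (M : ℤ) ∣ c - a * M ↔ (M : ℤ) ∣ c := dvd_sub_left (dvd_mul_left _ _)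
  rw [card_filter, sum_product]
  simp_rw [← card_filter, hrow, sum_add_distrib, ← card_filter, sum_const, card_range,
    smul_eq_mul, mul_one, range_add_one, filter_insert, hlast]
  rw [← card_filter_range_dvd_sub_mul hM a c]
  split_ifs
  · simp; ring
  · simp

end LinearCongruence

lemma three_dvd_two_pow_sub_one_iff (f : ℕ) : 3 ∣ 2 ^ f - 1 ↔ Even f := by
  have h4 : ∀ k, 3 ∣ 4 ^ k - 1 := fun k => by simpa using Nat.sub_dvd_pow_sub_pow 4 1 k
  rcases Nat.even_or_odd' f with ⟨k, rfl | rfl⟩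
  · simpa [pow_mul] using h4 k
  · obtain ⟨j, hj⟩ := h4 k
    have := Nat.one_le_pow k 4 (by norm_num)
    rw [pow_succ, pow_mul, iff_false_right (Nat.not_even_bit1 k)]
    norm_num
    omega

lemma gcd_three_two_pow_sub_one (f : ℕ) :
    Int.gcd 3 ((2 ^ f - 1 : ℕ) : ℤ) = if Even f then 3 else 1 := by
  rw [show (3 : ℤ) = ((3 : ℕ) : ℤ) from rfl, Int.gcd_natCast_natCast]
  split_ifs with hf
  · exact Nat.gcd_eq_left ((three_dvd_two_pow_sub_one_iff f).mpr hf)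
  · exact (Nat.Prime.coprime_iff_not_dvd Nat.prime_three).mpr
      (mt (three_dvd_two_pow_sub_one_iff f).mp hf)

lemma sum_univ_two_pow (f : ℕ) : ∑ i : Fin f, (2 : ℤ) ^ (i : ℕ) = 2 ^ f - 1 := by
  rw [Fin.sum_univ_eq_sum_range (fun i => (2 : ℤ) ^ i)]
  simpa using geom_sum_mul (2 : ℤ) f

section Binary

variable {f : ℕ}

def binaryValue (B : Finset (Fin f)) : ℕ := ∑ i ∈ B, 2 ^ (i : ℕ)

lemma binaryValue_eq_sum_map (B : Finset (Fin f)) :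
    binaryValue B = ∑ k ∈ B.map Fin.valEmbedding, 2 ^ k := by
  rw [binaryValue, sum_map]; rfl

lemma binaryValue_injective : Function.Injective (binaryValue (f := f)) := by
  intro B C h
  rw [binaryValue_eq_sum_map, binaryValue_eq_sum_map] at h
  exact map_injective _ (geomSum_injective le_rfl h)

lemma binaryValue_lt (B : Finset (Fin f)) : binaryValue B < 2 ^ f := by
  rw [binaryValue_eq_sum_map]
  exact Nat.geomSum_lt le_rfl (by simp)

lemma image_binaryValue : (univ : Finset (Finset (Fin f))).image binaryValue = range (2 ^ f) := by
  refine eq_of_subset_of_card_le (fun s hs => ?_) ?_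
  · obtain ⟨B, -, rfl⟩ := mem_image.mp hs
    exact mem_range.mpr (binaryValue_lt B)
  · rw [card_image_of_injective _ binaryValue_injective, card_univ, Fintype.card_finset,
      Fintype.card_fin, card_range]

lemma card_filter_binaryValue_pair (P : ℕ × ℕ → Prop) [DecidablePred P] :
    #{p : Finset (Fin f) × Finset (Fin f) | P (binaryValue p.1, binaryValue p.2)} =
      #{q ∈ range (2 ^ f) ×ˢ range (2 ^ f) | P q} := by
  rw [← image_binaryValue, ← prodMap_image_product, ← univ_product_univ, filter_image,
    card_image_of_injective _ (binaryValue_injective.prodMap binaryValue_injective)]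
  rfl

lemma natCast_binaryValue (B : Finset (Fin f)) :
    (binaryValue B : ℤ) = ∑ i ∈ B, (2 : ℤ) ^ (i : ℕ) := by
  push_cast [binaryValue]; rfl

end Binary

section Digits

variable {f : ℕ}

def digitsOf (B C : Finset (Fin f)) (i : Fin f) : ℤ := if (i ∈ B ↔ i ∈ C) then 2 else 1

def codeOf (b : Fin f → ℤ) (B : Finset (Fin f)) : Finset (Fin f) := {i | i ∈ B ↔ b i = 2}

lemma digitsOf_mem_Icc (B C : Finset (Fin f)) (i : Fin f) :
    1 ≤ digitsOf B C i ∧ digitsOf B C i ≤ 2 := by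
  unfold digitsOf; split_ifs <;> norm_num

lemma codeOf_digitsOf (B C : Finset (Fin f)) : codeOf (digitsOf B C) B = C := by
  ext i
  by_cases hB : i ∈ B <;> by_cases hC : i ∈ C <;> simp [codeOf, digitsOf, hB, hC]

lemma digitsOf_codeOf {b : Fin f → ℤ} (hb : ∀ i, 1 ≤ b i ∧ b i ≤ 2) (B : Finset (Fin f)) :
    digitsOf B (codeOf b B) = b := by
  funext i
  obtain h | h : b i = 1 ∨ b i = 2 := by have := hb i; omega
  all_goals by_cases hB : i ∈ B <;> simp [codeOf, digitsOf, hB, h]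

lemma sum_digitsOf_sub_sum_compl (B C : Finset (Fin f)) :
    ∑ i ∈ B, digitsOf B C i * 2 ^ (i : ℕ) - ∑ i ∈ Bᶜ, digitsOf B C i * 2 ^ (i : ℕ) =
      3 * ∑ i ∈ B, (2 : ℤ) ^ (i : ℕ) + ∑ i ∈ C, (2 : ℤ) ^ (i : ℕ) - 2 * (2 ^ f - 1) := by
  set g : Fin f → ℤ := fun i => if i ∈ C then 2 ^ (i : ℕ) else 0
  have hin : ∑ i ∈ B, digitsOf B C i * 2 ^ (i : ℕ) =
      ∑ i ∈ B, (2 : ℤ) ^ (i : ℕ) + ∑ i ∈ B, g i := by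
    rw [← sum_add_distrib]
    refine sum_congr rfl fun i hi => ?_
    by_cases hC : i ∈ C <;> simp [digitsOf, g, hi, hC]; ring
  have hout : ∑ i ∈ Bᶜ, digitsOf B C i * 2 ^ (i : ℕ) =
      2 * ∑ i ∈ Bᶜ, (2 : ℤ) ^ (i : ℕ) - ∑ i ∈ Bᶜ, g i := by
    rw [mul_sum, ← sum_sub_distrib]
    refine sum_congr rfl fun i hi => ?_
    by_cases hC : i ∈ C <;> simp [digitsOf, g, (mem_compl.mp hi), hC]; ring
  have hC : ∑ i ∈ C, (2 : ℤ) ^ (i : ℕ) = ∑ i ∈ B, g i + ∑ i ∈ Bᶜ, g i := by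
    rw [sum_add_sum_compl, sum_ite_mem, univ_inter]
  have hU : (2 : ℤ) ^ f - 1 = ∑ i ∈ B, (2 : ℤ) ^ (i : ℕ) + ∑ i ∈ Bᶜ, (2 : ℤ) ^ (i : ℕ) := by
    rw [sum_add_sum_compl, sum_univ_two_pow]
  rw [hin, hout, hC, hU]
  ring

lemma modEq_sum_digitsOf_sub_iff (B C : Finset (Fin f)) (c : ℤ) :
    c ≡ ∑ i ∈ B, digitsOf B C i * 2 ^ (i : ℕ) - ∑ i ∈ Bᶜ, digitsOf B C i * 2 ^ (i : ℕ)
        [ZMOD 2 ^ f - 1] ↔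
      c ≡ 3 * (binaryValue B : ℤ) + binaryValue C [ZMOD 2 ^ f - 1] := by
  rw [sum_digitsOf_sub_sum_compl, mul_comm 2, Int.modEq_sub_modulus_mul_iff,
    natCast_binaryValue, natCast_binaryValue]

end Digits

lemma ncard_Tset2_eq_card_pairs {f : ℕ} (hf : 0 < f) (n₁ n₂ : ℤ) :
    (Tset2 f n₁ n₂).ncard =
      #{p : Finset (Fin f) × Finset (Fin f) |
        n₁ - n₂ ≡ 3 * (binaryValue p.1 : ℤ) + binaryValue p.2 [ZMOD 2 ^ f - 1]} := by
  have hM : (0 : ℤ) < 2 ^ f - 1 := sub_pos.mpr (one_lt_pow₀ one_lt_two hf.ne')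
  rw [← Set.ncard_coe_finset]
  refine Set.ncard_congr (fun x _ => (x.2.2, codeOf x.2.1 x.2.2)) ?_ ?_ ?_
  · rintro ⟨a, b, B⟩ ⟨-, hb, h₁, h₂⟩
    simp only [coe_filter, mem_univ, true_and, Set.mem_ofPred_eq]
    rw [← modEq_sum_digitsOf_sub_iff, digitsOf_codeOf hb]
    simpa using h₁.sub h₂
  · rintro ⟨a, b, B⟩ ⟨a', b', B'⟩ ⟨⟨ha₀, ha₁⟩, hb, h₁, -⟩ ⟨⟨ha₀', ha₁'⟩, hb', h₁', -⟩ h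
    simp only [Prod.mk.injEq] at h
    obtain ⟨rfl, hC⟩ := h
    dsimp only at *
    obtain rfl : b = b' := by rw [← digitsOf_codeOf hb B, hC, digitsOf_codeOf hb' B]
    have h := Int.ModEq.add_right_cancel' _ (h₁.symm.trans h₁')
    rw [Int.ModEq, Int.emod_eq_of_lt ha₀ (by omega), Int.emod_eq_of_lt ha₀' (by omega)] at h
    rw [h]
  · rintro ⟨B, C⟩ h
    simp only [coe_filter, mem_univ, true_and, Set.mem_ofPred_eq] at h
    set X := ∑ i ∈ B, digitsOf B C i * 2 ^ (i : ℕ)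
    set Y := ∑ i ∈ Bᶜ, digitsOf B C i * 2 ^ (i : ℕ)
    have hXY : n₁ - n₂ ≡ X - Y [ZMOD 2 ^ f - 1] := (modEq_sum_digitsOf_sub_iff B C _).mpr h
    refine ⟨((n₁ - X) % (2 ^ f - 1), digitsOf B C, B),
      ⟨⟨Int.emod_nonneg _ hM.ne', by linarith [Int.emod_lt_of_pos (n₁ - X) hM]⟩,
        digitsOf_mem_Icc B C, ?_, ?_⟩, by simp [codeOf_digitsOf]⟩
    · simpa using ((Int.mod_modEq (n₁ - X) _).add_right X).symm
    · calc n₂ = n₁ - (n₁ - n₂) := by ring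
        _ ≡ n₁ - (X - Y) [ZMOD 2 ^ f - 1] := (Int.ModEq.refl n₁).sub hXY
        _ = n₁ - X + Y := by ring
        _ ≡ _ [ZMOD 2 ^ f - 1] := ((Int.mod_modEq _ _).add_right Y).symm

theorem ncard_Tset2 {f : ℕ} (hf : 0 < f) (n₁ n₂ : ℤ) :
    (Tset2 f n₁ n₂).ncard = 2 ^ f + (if (2 : ℤ) ^ f - 1 ∣ n₁ - n₂ then 1 else 0) +
      if Even f then (if (3 : ℤ) ∣ n₁ - n₂ then 3 else 0) else 1 := by
  set M := 2 ^ f - 1 with hM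
  have hMpos : 0 < M := Nat.sub_pos_of_lt (Nat.one_lt_two_pow hf.ne')
  have hMZ : (M : ℤ) = 2 ^ f - 1 := by push_cast [hM, Nat.one_le_two_pow]; rfl
  have hN : 2 ^ f = M + 1 := (Nat.sub_add_cancel Nat.one_le_two_pow).symm
  rw [ncard_Tset2_eq_card_pairs hf, ← hMZ,
    card_filter_binaryValue_pair fun q => n₁ - n₂ ≡ 3 * (q.1 : ℤ) + q.2 [ZMOD M], hN,
    card_filter_modEq_mul_add hMpos, gcd_three_two_pow_sub_one]
  split_ifs <;> simp_all

/-- Suppose `ℓ = 2` and `f ≥ 2`, and let `n = n₁ − n₂`.  Then (congruences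
modulo `2^f − 1`): `M = 2^f + 4` if `n ≡ 0` and `f` even; `M = 2^f + 3` if
`n ≢ 0`, `3 ∣ n` and `f` even; `M = 2^f + 2` if `n ≡ 0` and `f` odd;
`M = 2^f + 1` if `n ≢ 0` and `f` odd; `M = 2^f` if `3 ∤ n` and `f` even. -/
theorem stmt17 (f : ℕ) (hf : 2 ≤ f) (n₁ n₂ : ℤ) :
    (Int.ModEq ((2 : ℤ) ^ f - 1) (n₁ - n₂) 0 → Even f →
      (Tset2 f n₁ n₂).ncard = 2 ^ f + 4) ∧
    (¬ Int.ModEq ((2 : ℤ) ^ f - 1) (n₁ - n₂) 0 → (3 : ℤ) ∣ (n₁ - n₂) → Even f →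
      (Tset2 f n₁ n₂).ncard = 2 ^ f + 3) ∧
    (Int.ModEq ((2 : ℤ) ^ f - 1) (n₁ - n₂) 0 → Odd f →
      (Tset2 f n₁ n₂).ncard = 2 ^ f + 2) ∧
    (¬ Int.ModEq ((2 : ℤ) ^ f - 1) (n₁ - n₂) 0 → Odd f →
      (Tset2 f n₁ n₂).ncard = 2 ^ f + 1) ∧
    (¬ (3 : ℤ) ∣ (n₁ - n₂) → Even f →
      (Tset2 f n₁ n₂).ncard = 2 ^ f) := by
  have h3 : Even f → (3 : ℤ) ∣ 2 ^ f - 1 := fun he => by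
    have := Int.natCast_dvd_natCast.mpr ((three_dvd_two_pow_sub_one_iff f).mpr he)
    push_cast [Nat.one_le_two_pow] at this
    exact this
  simp only [Int.modEq_zero_iff_dvd, ncard_Tset2 (by omega : 0 < f), ← Nat.not_even_iff_odd]
  refine ⟨fun hM he => ?_, fun hM h3n he => ?_, fun hM ho => ?_, fun hM ho => ?_, fun h3n he => ?_⟩
  · simp [hM, he, (h3 he).trans hM]
  · simp [hM, h3n, he]
  · simp [hM, ho]
  · simp [hM, ho]
  · simp [h3n, he, mt (h3 he).trans h3n]

end Stmt17
end

section
/- Let ℓ ≥ 3 be an integer and f a positive integer. If B₁ and B₂ are subsets of {0,1,…,f−1} satisfying ∑_{i∈B₂} (−1)^i ℓ^i = ∑_{i∈B₁} (−1)^i ℓ^i + ∑_{i=0}^{f−1} (−1)^i ℓ^i, then B₁ = ∅ and B₂ = {0,1,…,f−1}. -/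
namespace Stmt19

lemma aux (m : ℤ) (hm : 3 ≤ |m|) : ∀ (f : ℕ) (c : ℕ → ℤ), (∀ i, |c i| ≤ 2) →
    (∑ i ∈ Finset.range f, c i * m ^ i) = 0 → ∀ i < f, c i = 0 := by
  intro f
  induction f with
  | zero => intro c _ _ i hi; omega
  | succ n ih =>
    intro c hc hsum i hi
    rw [Finset.sum_range_succ'] at hsum
    have key : c 0 + m * ∑ i ∈ Finset.range n, c (i + 1) * m ^ i = 0 := by
      have e : ∑ i ∈ Finset.range n, m * (c (i + 1) * m ^ i) =
          ∑ i ∈ Finset.range n, c (i + 1) * m ^ (i + 1) :=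
        Finset.sum_congr rfl (fun x _ => by ring)
      rw [Finset.mul_sum, e]
      simp only [pow_zero, mul_one] at hsum
      linarith
    have hc0 : c 0 = 0 := by
      by_contra hne
      have hdvd : |m| ∣ |c 0| := (abs_dvd _ _).mpr ((dvd_abs _ _).mpr
        ⟨-(∑ i ∈ Finset.range n, c (i + 1) * m ^ i), by linarith⟩)
      have := Int.le_of_dvd (abs_pos.mpr hne) hdvd
      have := hc 0
      omega
    have hS : ∑ i ∈ Finset.range n, c (i + 1) * m ^ i = 0 := by
      have hmne : m ≠ 0 := by
        intro h; rw [h] at hm; simp at hm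
      have : m * ∑ i ∈ Finset.range n, c (i + 1) * m ^ i = 0 := by linarith
      exact (mul_eq_zero.mp this).resolve_left hmne
    rcases i with _ | j
    · exact hc0
    · exact ih (fun i => c (i + 1)) (fun i => hc (i + 1)) hS j (by omega)

/-- Let `ℓ ≥ 3` be an integer and `f` a positive integer.  If `B₁, B₂` are
subsets of `{0,…,f−1}` with
`∑_{i∈B₂} (−1)^i ℓ^i = ∑_{i∈B₁} (−1)^i ℓ^i + ∑_{i=0}^{f−1} (−1)^i ℓ^i`,
then `B₁ = ∅` and `B₂ = {0,…,f−1}`. -/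
theorem stmt19 (ℓ : ℤ) (hℓ : 3 ≤ ℓ) (f : ℕ) (hf : 0 < f)
    (B₁ B₂ : Finset (Fin f))
    (h : ∑ i ∈ B₂, (-1 : ℤ) ^ (i : ℕ) * ℓ ^ (i : ℕ) =
        ∑ i ∈ B₁, (-1 : ℤ) ^ (i : ℕ) * ℓ ^ (i : ℕ) +
        ∑ i : Fin f, (-1 : ℤ) ^ (i : ℕ) * ℓ ^ (i : ℕ)) :
    B₁ = ∅ ∧ B₂ = Finset.univ := by
  set m : ℤ := -ℓ with hm
  have hmabs : 3 ≤ |m| := by rw [hm, abs_neg, abs_of_pos (by omega)]; exact hℓ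
  set c' : Fin f → ℤ := fun i =>
    (if i ∈ B₂ then 1 else 0) - (if i ∈ B₁ then 1 else 0) - 1 with hc'
  set c : ℕ → ℤ := fun j => if hj : j < f then c' ⟨j, hj⟩ else 0 with hcdef
  have hpow : ∀ i : ℕ, (-1 : ℤ) ^ i * ℓ ^ i = m ^ i := by
    intro i; rw [hm]; ring
  have hsum' : ∑ i : Fin f, c' i * m ^ (i : ℕ) = 0 := by
    have e2 : ∑ i ∈ B₂, (-1 : ℤ) ^ (i : ℕ) * ℓ ^ (i : ℕ) =
        ∑ i : Fin f, (if i ∈ B₂ then (1 : ℤ) else 0) * m ^ (i : ℕ) := by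
      rw [← Finset.sum_filter_of_ne (f := fun i : Fin f => (if i ∈ B₂ then (1:ℤ) else 0) * m ^ (i:ℕ))
        (p := fun i => i ∈ B₂)]
      · simp only [Finset.filter_mem_eq_inter, Finset.univ_inter]
        exact Finset.sum_congr rfl (fun i hi => by rw [if_pos hi, one_mul, hpow])
      · intro x _ hx
        by_contra hmem
        simp [hmem] at hx
    have e1 : ∑ i ∈ B₁, (-1 : ℤ) ^ (i : ℕ) * ℓ ^ (i : ℕ) =
        ∑ i : Fin f, (if i ∈ B₁ then (1 : ℤ) else 0) * m ^ (i : ℕ) := by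
      rw [← Finset.sum_filter_of_ne (f := fun i : Fin f => (if i ∈ B₁ then (1:ℤ) else 0) * m ^ (i:ℕ))
        (p := fun i => i ∈ B₁)]
      · simp only [Finset.filter_mem_eq_inter, Finset.univ_inter]
        exact Finset.sum_congr rfl (fun i hi => by rw [if_pos hi, one_mul, hpow])
      · intro x _ hx
        by_contra hmem
        simp [hmem] at hx
    have e3 : ∑ i : Fin f, (-1 : ℤ) ^ (i : ℕ) * ℓ ^ (i : ℕ) =
        ∑ i : Fin f, (1 : ℤ) * m ^ (i : ℕ) := by
      exact Finset.sum_congr rfl (fun i _ => by rw [one_mul, hpow])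
    rw [e2, e1, e3] at h
    have : ∑ i : Fin f, c' i * m ^ (i : ℕ) =
        ∑ i : Fin f, ((if i ∈ B₂ then (1:ℤ) else 0) * m ^ (i:ℕ)
          - (if i ∈ B₁ then (1:ℤ) else 0) * m ^ (i:ℕ) - (1:ℤ) * m ^ (i:ℕ)) := by
      exact Finset.sum_congr rfl (fun i _ => by rw [hc']; ring)
    rw [this, Finset.sum_sub_distrib, Finset.sum_sub_distrib]
    rw [h]; ring
  have hsumr : ∑ j ∈ Finset.range f, c j * m ^ j = 0 := by
    rw [← Fin.sum_univ_eq_sum_range (fun j => c j * m ^ j) f]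
    rw [← hsum']
    exact Finset.sum_congr rfl (fun i _ => by
      rw [hcdef]; simp only [i.isLt, dif_pos, Fin.eta])
  have hzero : ∀ i : Fin f, c' i = 0 := by
    intro i
    have := aux m hmabs f c (fun j => by
      rw [hcdef]; dsimp only
      split
      · rw [hc']; dsimp only; split <;> split <;> norm_num
      · norm_num) hsumr (i : ℕ) i.isLt
    rw [hcdef] at this
    simpa [i.isLt] using this
  constructor
  · ext i
    simp only [Finset.notMem_empty, iff_false]
    intro hi
    have := hzero i
    rw [hc'] at this
    simp only [hi, if_pos] at this
    split at this <;> omega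
  · ext i
    simp only [Finset.mem_univ, iff_true]
    have := hzero i
    rw [hc'] at this
    by_contra hi
    simp only [hc', hi, if_false] at this
    split at this <;> omega
end Stmt19
end
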